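/- arXiv:2312.00555 — 10 statements merged into one kernel-verified Lean document; each statement's English description precedes it below -/
import Mathlib

section
/- Let D = (D₁, D₂) be a bipartite degree sequence that is graphic, i.e., there exists a simple bipartite graph G = (U, V, E) whose vertex degrees on U are exactly D₁ and on V are exactly D₂. Let dᵢ, dⱼ be two entries of D₁ with dᵢ < dⱼ. Let D' be the bipartite degree sequence obtained from D by adding 1 to the entry dᵢ and subtracting 1 from the entry dⱼ. Then D' is also a graphic bipartite degree sequence. -/
/-- A bipartite degree sequence `(D₁, D₂)` is graphic: there exists a simple bipartite graph,
given by its edge set `E ⊆ U × V` (no multiple edges), whose degrees on `U` are exactly `D₁`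
and on `V` are exactly `D₂`. -/
def BipartiteGraphic {n m : ℕ} (D₁ : Fin n → ℕ) (D₂ : Fin m → ℕ) : Prop :=
  ∃ E : Finset (Fin n × Fin m),
    (∀ u, (E.filter fun e => e.1 = u).card = D₁ u) ∧
    (∀ v, (E.filter fun e => e.2 = v).card = D₂ v)

/-- If `(D₁, D₂)` is a graphic bipartite degree sequence and `D₁ i < D₁ j`, then the bipartite
degree sequence obtained by adding `1` to entry `i` and subtracting `1` from entry `j`
of `D₁` is also graphic. -/
theorem statement0 {n m : ℕ} (D₁ : Fin n → ℕ) (D₂ : Fin m → ℕ) (i j : Fin n)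
    (hij : D₁ i < D₁ j) (h : BipartiteGraphic D₁ D₂) :
    BipartiteGraphic (Function.update (Function.update D₁ i (D₁ i + 1)) j (D₁ j - 1)) D₂ := by
  obtain ⟨E, h1, h2⟩ := h
  have hne : i ≠ j := fun hh => by simp [hh] at hij
  have hinj : ∀ u : Fin n, ((E.filter fun e => e.1 = u).image Prod.snd).card = D₁ u := by
    intro u
    rw [Finset.card_image_of_injOn, h1]
    intro a ha b hb hab
    simp only [Finset.mem_coe, Finset.mem_filter] at ha hb
    exact Prod.ext (ha.2.trans hb.2.symm) hab
  have hlt : ((E.filter fun e => e.1 = i).image Prod.snd).card <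
      ((E.filter fun e => e.1 = j).image Prod.snd).card := by
    rw [hinj, hinj]; exact hij
  obtain ⟨v, hvj, hvi⟩ : ∃ v ∈ (E.filter fun e => e.1 = j).image Prod.snd,
      v ∉ (E.filter fun e => e.1 = i).image Prod.snd := by
    by_contra hc
    push_neg at hc
    exact absurd (Finset.card_le_card hc) (not_le.2 hlt)
  have hjv : (j, v) ∈ E := by
    simp only [Finset.mem_image, Finset.mem_filter] at hvj
    obtain ⟨e, ⟨he, h1'⟩, h2'⟩ := hvj
    have : e = (j, v) := Prod.ext h1' h2'
    rwa [this] at he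
  have hiv : (i, v) ∉ E := fun hmem =>
    hvi (Finset.mem_image.2 ⟨(i, v), Finset.mem_filter.2 ⟨hmem, rfl⟩, rfl⟩)
  refine ⟨insert (i, v) (E.erase (j, v)), ?_, ?_⟩
  · intro u
    have hfe : ((E.erase (j, v)).filter fun e => e.1 = u) =
        (E.filter fun e => e.1 = u).erase (j, v) := Finset.filter_erase _ _ _
    rcases eq_or_ne u j with rfl | huj
    · have hmemf : (u, v) ∈ E.filter fun e => e.1 = u := Finset.mem_filter.2 ⟨hjv, rfl⟩
      rw [Finset.filter_insert]
      simp only [show ¬ ((i, v).1 = u) from hne, if_false]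
      rw [hfe, Finset.card_erase_of_mem hmemf, h1, Function.update_self]
    · have hjnotmem : (j, v) ∉ E.filter fun e => e.1 = u := by
        intro hmem
        have hh := (Finset.mem_filter.1 hmem).2
        simp only at hh
        exact huj hh.symm
      rcases eq_or_ne u i with rfl | hui
      · have hinotmem : (u, v) ∉ E.filter fun e => e.1 = u :=
          fun hmem => hiv (Finset.mem_filter.1 hmem).1
        rw [Finset.filter_insert]
        simp only [if_true]
        rw [hfe, Finset.erase_eq_of_notMem hjnotmem,
          Finset.card_insert_of_notMem hinotmem, h1,
          Function.update_of_ne huj, Function.update_self]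
      · rw [Finset.filter_insert]
        simp only [show ¬ ((i, v).1 = u) from fun hh => hui hh.symm, if_false]
        rw [hfe, Finset.erase_eq_of_notMem hjnotmem, h1,
          Function.update_of_ne huj, Function.update_of_ne hui]
  · intro w
    have hfe : ((E.erase (j, v)).filter fun e => e.2 = w) =
        (E.filter fun e => e.2 = w).erase (j, v) := Finset.filter_erase _ _ _
    rcases eq_or_ne w v with rfl | hwv
    · have hmemf : (j, w) ∈ E.filter fun e => e.2 = w := Finset.mem_filter.2 ⟨hjv, rfl⟩
      have hinotmem : (i, w) ∉ (E.filter fun e => e.2 = w).erase (j, w) := by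
        intro hmem
        exact hiv (Finset.mem_filter.1 (Finset.mem_erase.1 hmem).2).1
      have hpos : (E.filter fun e => e.2 = w).card ≠ 0 :=
        Finset.card_ne_zero_of_mem hmemf
      rw [Finset.filter_insert]
      simp only [if_true]
      rw [hfe, Finset.card_insert_of_notMem hinotmem,
        Finset.card_erase_of_mem hmemf]
      rw [h2] at hpos ⊢
      omega
    · have hjnotmem : (j, v) ∉ E.filter fun e => e.2 = w := by
        intro hmem
        have hh := (Finset.mem_filter.1 hmem).2
        simp only at hh
        exact hwv hh.symm
      rw [Finset.filter_insert]
      simp only [show ¬ ((i, v).2 = w) from fun hh => hwv hh.symm, if_false]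
      rw [hfe, Finset.erase_eq_of_notMem hjnotmem, h2]
end

section
/- Let D = (D₁, D₂, D₃) be a tripartite 3-uniform hypergraph degree sequence that is graphic, i.e., there exists a tripartite 3-uniform hypergraph H = (A, B, C, E) whose degrees on the three vertex classes realize D₁, D₂, D₃. Let dᵢ, dⱼ be two entries of D₁ with dᵢ < dⱼ. Let D' be the tripartite degree sequence obtained from D by adding 1 to the entry dᵢ and subtracting 1 from the entry dⱼ. Then D' is also a graphic tripartite 3-uniform hypergraph degree sequence. -/
/-- A tripartite 3-uniform hypergraph degree sequence `(D₁, D₂, D₃)` is graphic: there exists a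
tripartite 3-uniform hypergraph, given by its set of hyperedges `E ⊆ A × B × C` (each hyperedge
has exactly one vertex in each class, no repeated hyperedges), whose degrees on the three
vertex classes are exactly `D₁`, `D₂`, `D₃`. -/
def TripartiteGraphic {n₁ n₂ n₃ : ℕ} (D₁ : Fin n₁ → ℕ) (D₂ : Fin n₂ → ℕ)
    (D₃ : Fin n₃ → ℕ) : Prop :=
  ∃ E : Finset (Fin n₁ × Fin n₂ × Fin n₃),
    (∀ a, (E.filter fun e => e.1 = a).card = D₁ a) ∧
    (∀ b, (E.filter fun e => e.2.1 = b).card = D₂ b) ∧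
    (∀ c, (E.filter fun e => e.2.2 = c).card = D₃ c)

lemma swap_card_eq {α : Type*} [DecidableEq α] (E : Finset α) (x y : α) (hx : x ∉ E)
    (hy : y ∈ E) (P : α → Prop) [DecidablePred P] (hP : P x ↔ P y) :
    ((insert x (E.erase y)).filter P).card = (E.filter P).card := by
  rw [Finset.filter_insert, Finset.filter_erase]
  by_cases hPx : P x
  · rw [if_pos hPx]
    have hyf : y ∈ E.filter P := Finset.mem_filter.2 ⟨hy, hP.1 hPx⟩
    rw [Finset.card_insert_of_notMem
      (fun hmem => hx (Finset.mem_filter.1 (Finset.mem_of_mem_erase hmem)).1)]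
    rw [Finset.card_erase_of_mem hyf]
    have : 1 ≤ (E.filter P).card := Finset.card_pos.2 ⟨y, hyf⟩
    omega
  · rw [if_neg hPx, Finset.erase_eq_of_notMem
      (fun hmem => hPx (hP.2 (Finset.mem_filter.1 hmem).2))]

lemma swap_card_add {α : Type*} [DecidableEq α] (E : Finset α) (x y : α) (hx : x ∉ E)
    (P : α → Prop) [DecidablePred P] (hPx : P x) (hPy : ¬ P y) :
    ((insert x (E.erase y)).filter P).card = (E.filter P).card + 1 := by
  rw [Finset.filter_insert, Finset.filter_erase, if_pos hPx,
    Finset.erase_eq_of_notMem (fun hmem => hPy (Finset.mem_filter.1 hmem).2),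
    Finset.card_insert_of_notMem (fun hmem => hx (Finset.mem_filter.1 hmem).1)]

lemma swap_card_sub {α : Type*} [DecidableEq α] (E : Finset α) (x y : α) (hy : y ∈ E)
    (P : α → Prop) [DecidablePred P] (hPx : ¬ P x) (hPy : P y) :
    ((insert x (E.erase y)).filter P).card = (E.filter P).card - 1 := by
  rw [Finset.filter_insert, Finset.filter_erase, if_neg hPx,
    Finset.card_erase_of_mem (Finset.mem_filter.2 ⟨hy, hPy⟩)]

/-- If `(D₁, D₂, D₃)` is a graphic tripartite 3-uniform hypergraph degree sequence and
`D₁ i < D₁ j`, then the tripartite degree sequence obtained by adding `1` to entry `i` and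
subtracting `1` from entry `j` of `D₁` is also graphic. -/
theorem statement1 {n₁ n₂ n₃ : ℕ} (D₁ : Fin n₁ → ℕ) (D₂ : Fin n₂ → ℕ) (D₃ : Fin n₃ → ℕ)
    (i j : Fin n₁) (hij : D₁ i < D₁ j) (h : TripartiteGraphic D₁ D₂ D₃) :
    TripartiteGraphic (Function.update (Function.update D₁ i (D₁ i + 1)) j (D₁ j - 1)) D₂ D₃ := by
  obtain ⟨E, h1, h2, h3⟩ := h
  have hij' : i ≠ j := fun h => by subst h; omega
  -- images of the neighborhoods
  set S : Fin n₁ → Finset (Fin n₂ × Fin n₃) :=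
    fun a => (E.filter fun e => e.1 = a).image Prod.snd with hS
  have hScard : ∀ a, (S a).card = D₁ a := by
    intro a
    rw [hS]
    rw [Finset.card_image_of_injOn, h1 a]
    intro e he f hf hef
    have he1 : e.1 = a := (Finset.mem_filter.1 he).2
    have hf1 : f.1 = a := (Finset.mem_filter.1 hf).2
    exact Prod.ext (he1.trans hf1.symm) hef
  have hlt : (S i).card < (S j).card := by rw [hScard, hScard]; exact hij
  have hne : (S j \ S i).Nonempty := by
    rw [← Finset.card_pos]
    have := Finset.le_card_sdiff (S i) (S j)
    omega
  obtain ⟨p, hp⟩ := hne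
  obtain ⟨hpj, hpi⟩ := Finset.mem_sdiff.1 hp
  obtain ⟨e, he, hep⟩ := Finset.mem_image.1 hpj
  obtain ⟨heE, he1⟩ := Finset.mem_filter.1 he
  have hyE : (j, p.1, p.2) ∈ E := by
    have : e = (j, p.1, p.2) := by
      rw [← he1, ← hep]
    rwa [← this]
  have hxE : (i, p.1, p.2) ∉ E := by
    intro hmem
    exact hpi (Finset.mem_image.2 ⟨(i, p.1, p.2), Finset.mem_filter.2 ⟨hmem, rfl⟩, rfl⟩)
  refine ⟨insert (i, p.1, p.2) (E.erase (j, p.1, p.2)), ?_, ?_, ?_⟩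
  · intro a
    by_cases hai : a = i
    · subst hai
      rw [swap_card_add E _ _ hxE (fun e => e.1 = a) rfl (by simp [hij'.symm]), h1,
        Function.update_of_ne hij', Function.update_self]
    · by_cases haj : a = j
      · subst haj
        rw [swap_card_sub E _ _ hyE (fun e => e.1 = a) (by simp [Ne.symm hai]) rfl, h1,
          Function.update_self]
      · rw [swap_card_eq E _ _ hxE hyE (fun e => e.1 = a)
            (by simp [Ne.symm hai, Ne.symm haj]), h1,
          Function.update_of_ne haj, Function.update_of_ne hai]
  · intro b
    rw [swap_card_eq E _ _ hxE hyE (fun e => e.2.1 = b) Iff.rfl, h2]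
  · intro c
    rw [swap_card_eq E _ _ hxE hyE (fun e => e.2.2 = c) Iff.rfl, h3]
end

section
/- Let D be a 3-uniform hypergraph degree sequence that is graphic, i.e., there exists a 3-uniform hypergraph whose vertex degrees are exactly the entries of D. Let dᵢ, dⱼ be two entries of D with dᵢ < dⱼ. Let D' be the degree sequence obtained from D by adding 1 to the entry dᵢ and subtracting 1 from the entry dⱼ. Then D' is also a graphic 3-uniform hypergraph degree sequence. -/
/-- A degree sequence `D` on `n` vertices is graphic as a 3-uniform hypergraph degree sequence:
there exists a set `E` of 3-element subsets of the vertex set (no repeated hyperedges) such that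
the degree of each vertex `v` (the number of hyperedges containing `v`) is exactly `D v`. -/
def HypergraphGraphic {n : ℕ} (D : Fin n → ℕ) : Prop :=
  ∃ E : Finset (Finset (Fin n)),
    (∀ e ∈ E, e.card = 3) ∧
    (∀ v, (E.filter fun e => v ∈ e).card = D v)

/-- If `D` is a graphic 3-uniform hypergraph degree sequence and `D i < D j`, then the degree
sequence obtained by adding `1` to entry `i` and subtracting `1` from entry `j` is also
graphic. -/
theorem statement2 {n : ℕ} (D : Fin n → ℕ) (i j : Fin n)
    (hij : D i < D j) (h : HypergraphGraphic D) :
    HypergraphGraphic (Function.update (Function.update D i (D i + 1)) j (D j - 1)) := by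
  obtain ⟨E, hE3, hEdeg⟩ := h
  have hij' : i ≠ j := fun h' => by simp [h'] at hij
  -- split the degree counts
  have split : ∀ v w : Fin n, (E.filter fun e => v ∈ e).card =
      (E.filter fun e => v ∈ e ∧ w ∈ e).card + (E.filter fun e => v ∈ e ∧ w ∉ e).card := by
    intro v w
    rw [← Finset.card_filter_add_card_filter_not
      (s := E.filter fun e => v ∈ e) (p := fun e => w ∈ e),
      Finset.filter_filter, Finset.filter_filter]
  have hcomm : (E.filter fun e => j ∈ e ∧ i ∈ e).card
      = (E.filter fun e => i ∈ e ∧ j ∈ e).card := by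
    congr 1
    apply Finset.filter_congr
    intro e _
    simp [and_comm]
  have hAB : (E.filter fun e => i ∈ e ∧ j ∉ e).card
      < (E.filter fun e => j ∈ e ∧ i ∉ e).card := by
    have h1 := split j i
    have h2 := split i j
    rw [hEdeg j] at h1
    rw [hEdeg i] at h2
    omega
  -- find an edge e with j ∈ e, i ∉ e, whose swap is not in E
  have hex : ∃ e ∈ E.filter (fun e => j ∈ e ∧ i ∉ e), insert i (e.erase j) ∉ E := by
    by_contra hcon
    push_neg at hcon
    have hle := Finset.card_le_card_of_injOn (f := fun e => insert i (e.erase j))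
      (s := E.filter fun e => j ∈ e ∧ i ∉ e) (t := E.filter fun e => i ∈ e ∧ j ∉ e)
      (by
        intro e he
        obtain ⟨heE, hje, hie⟩ := by simpa using he
        have := hcon e (by simp [heE, hje, hie])
        simp [this, Finset.mem_insert, Finset.mem_erase, Ne.symm hij', hij'])
      (by
        intro e1 h1 e2 h2 heq
        obtain ⟨_, hj1, hi1⟩ := by simpa using h1
        obtain ⟨_, hj2, hi2⟩ := by simpa using h2
        have hi1' : i ∉ e1.erase j := fun hm => hi1 (Finset.mem_of_mem_erase hm)
        have hi2' : i ∉ e2.erase j := fun hm => hi2 (Finset.mem_of_mem_erase hm)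
        have : e1.erase j = e2.erase j := by
          have := congrArg (fun s => Finset.erase s i) heq
          simpa [Finset.erase_insert hi1', Finset.erase_insert hi2'] using this
        calc e1 = insert j (e1.erase j) := (Finset.insert_erase hj1).symm
          _ = insert j (e2.erase j) := by rw [this]
          _ = e2 := Finset.insert_erase hj2)
    omega
  obtain ⟨e, heA, hfE⟩ := hex
  obtain ⟨heE, hje, hie⟩ := by simpa using heA
  set f := insert i (e.erase j) with hf
  have hie' : i ∉ e.erase j := fun hm => hie (Finset.mem_of_mem_erase hm)
  have hif : i ∈ f := Finset.mem_insert_self _ _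
  have hjf : j ∉ f := by simp [hf, Finset.mem_insert, Ne.symm hij']
  have hfe : f ≠ e := fun h' => hie (h' ▸ hif)
  have hfE' : f ∉ E.erase e := fun hm => hfE (Finset.mem_of_mem_erase hm)
  refine ⟨insert f (E.erase e), ?_, ?_⟩
  · intro e' he'
    rcases Finset.mem_insert.mp he' with h' | h'
    · subst h'
      rw [hf, Finset.card_insert_of_notMem hie', Finset.card_erase_of_mem hje, hE3 e heE]
    · exact hE3 e' (Finset.mem_of_mem_erase h')
  · intro v
    have hkey : ∀ v : Fin n, ((E.erase e).filter fun e' => v ∈ e').card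
        = if v ∈ e then D v - 1 else D v := by
      intro v
      rw [Finset.filter_erase]
      by_cases hv : v ∈ e
      · rw [if_pos hv, Finset.card_erase_of_mem (Finset.mem_filter.mpr ⟨heE, hv⟩), hEdeg]
      · rw [if_neg hv, Finset.erase_eq_of_notMem
          (s := E.filter fun e' => v ∈ e') (a := e) (by simp [hv]), hEdeg]
    by_cases hvj : v = j
    · subst hvj
      rw [Finset.filter_insert, if_neg hjf, hkey, if_pos hje, Function.update_self]
    · by_cases hvi : v = i
      · subst hvi
        rw [Finset.filter_insert, if_pos hif, Finset.card_insert_of_notMem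
          (fun hm => hfE' (Finset.mem_filter.mp hm).1), hkey, if_neg hie,
          Function.update_of_ne hvj, Function.update_self]
      · have hvf : v ∈ f ↔ v ∈ e := by
          simp [hf, Finset.mem_insert, Finset.mem_erase, hvi, hvj]
        rw [Function.update_of_ne hvj, Function.update_of_ne hvi]
        by_cases hv : v ∈ e
        · have hge : 1 ≤ D v := by
            rw [← hEdeg v]
            exact Finset.card_pos.mpr ⟨e, Finset.mem_filter.mpr ⟨heE, hv⟩⟩
          rw [Finset.filter_insert, if_pos (hvf.mpr hv), Finset.card_insert_of_notMem
            (fun hm => hfE' (Finset.mem_filter.mp hm).1), hkey, if_pos hv]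
          omega
        · rw [Finset.filter_insert, if_neg (fun hm => hv (hvf.mp hm)), hkey, if_neg hv]
end

section
/- Let D = (D₁, D₂) be a graphic bipartite degree sequence on n + m vertices such that D₁ consists of some number of entries equal to d₁ₘₐₓ, one entry d₁ with d₁ₘᵢₙ ≤ d₁ ≤ d₁ₘₐₓ, and the remaining entries equal to d₁ₘᵢₙ; and D₂ consists of some number of entries equal to d₂ₘₐₓ, one entry d₂ with d₂ₘᵢₙ ≤ d₂ ≤ d₂ₘₐₓ, and the remaining entries equal to d₂ₘᵢₙ. Let D' = (D₁', D₂') be a bipartite degree sequence on n + m vertices such that every entry of D₁' lies between d₁ₘᵢₙ and d₁ₘₐₓ, every entry of D₂' lies between d₂ₘᵢₙ and d₂ₘₐₓ, the sum of the entries of D₁' equals the sum of the entries of D₁, and the sum of the entries of D₂' equals the sum of the entries of D₂. Then D' is also a graphic bipartite degree sequence. -/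
open Finset


-- Auxiliary lemmas
lemma swapBG {n m : ℕ} {D₁ : Fin n → ℕ} {D₂ : Fin m → ℕ} (h : BipartiteGraphic D₁ D₂) :
    BipartiteGraphic D₂ D₁ := by
  obtain ⟨E, h1, h2⟩ := h
  refine ⟨E.image Prod.swap, fun v => ?_, fun u => ?_⟩
  · rw [← h2 v]
    rw [Finset.filter_image]
    rw [Finset.card_image_of_injOn (Prod.swap_injective.injOn.mono (Finset.filter_subset _ _))]
    rfl
  · rw [← h1 u]
    rw [Finset.filter_image]
    rw [Finset.card_image_of_injOn (Prod.swap_injective.injOn.mono (Finset.filter_subset _ _))]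
    rfl

lemma relabelBG {n m : ℕ} {c : Fin n → ℕ} {D₂ : Fin m → ℕ} (σ : Equiv.Perm (Fin n))
    (h : BipartiteGraphic c D₂) : BipartiteGraphic (c ∘ σ) D₂ := by
  obtain ⟨E, h1, h2⟩ := h
  refine ⟨E.image (fun e => (σ.symm e.1, e.2)), fun u => ?_, fun v => ?_⟩
  · have hinj : Function.Injective (fun e : Fin n × Fin m => (σ.symm e.1, e.2)) := by
      intro a b hab
      simp only [Prod.mk.injEq] at hab
      exact Prod.ext (σ.symm.injective hab.1) hab.2
    have : ((E.image (fun e => (σ.symm e.1, e.2))).filter fun e => e.1 = u)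
        = (E.filter fun e => e.1 = σ u).image (fun e => (σ.symm e.1, e.2)) := by
      rw [Finset.filter_image]
      congr 1
      apply Finset.filter_congr
      intro e _
      simp only []
      constructor
      · intro he; rw [← he]; simp
      · intro he; rw [he]; simp
    rw [this, Finset.card_image_of_injective _ hinj, h1]
    simp
  · have hinj : Function.Injective (fun e : Fin n × Fin m => (σ.symm e.1, e.2)) := by
      intro a b hab
      simp only [Prod.mk.injEq] at hab
      exact Prod.ext (σ.symm.injective hab.1) hab.2
    have : ((E.image (fun e => (σ.symm e.1, e.2))).filter fun e => e.2 = v)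
        = (E.filter fun e => e.2 = v).image (fun e => (σ.symm e.1, e.2)) := by
      rw [Finset.filter_image]
    rw [this, Finset.card_image_of_injective _ hinj, h2]

lemma perm_of_counts {n : ℕ} (c y : Fin n → ℕ)
    (h : ∀ a : ℕ, (univ.filter fun i => c i = a).card = (univ.filter fun i => y i = a).card) :
    ∃ σ : Equiv.Perm (Fin n), ∀ i, y (σ i) = c i := by
  have hfib : ∀ a : ℕ, { i // c i = a } ≃ { i // y i = a } := by
    intro a
    apply Fintype.equivOfCardEq
    simpa [Fintype.card_subtype] using h a
  exact ⟨Equiv.ofFiberEquiv hfib, fun i => Equiv.ofFiberEquiv_map hfib i⟩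

lemma transferBG {n m : ℕ} {c : Fin n → ℕ} {D₂ : Fin m → ℕ} {k l : Fin n}
    (hkl : c l < c k) (hg : BipartiteGraphic c D₂) :
    BipartiteGraphic (fun i => if i = k then c k - 1 else if i = l then c l + 1 else c i) D₂ := by
  obtain ⟨E, h1, h2⟩ := hg
  have hklne : k ≠ l := by rintro rfl; omega
  -- neighborhoods
  set Sk := (E.filter fun e => e.1 = k).image Prod.snd with hSk
  set Sl := (E.filter fun e => e.1 = l).image Prod.snd with hSl
  have cardSk : Sk.card = c k := by
    rw [hSk, Finset.card_image_of_injOn, h1]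
    intro a ha b hb hab
    simp only [Finset.mem_coe, Finset.mem_filter] at ha hb
    exact Prod.ext (ha.2.trans hb.2.symm) hab
  have cardSl : Sl.card = c l := by
    rw [hSl, Finset.card_image_of_injOn, h1]
    intro a ha b hb hab
    simp only [Finset.mem_coe, Finset.mem_filter] at ha hb
    exact Prod.ext (ha.2.trans hb.2.symm) hab
  have : ∃ v ∈ Sk, v ∉ Sl := by
    by_contra hcon
    push_neg at hcon
    have := Finset.card_le_card hcon
    omega
  obtain ⟨v, hvSk, hvSl⟩ := this
  have hkvE : (k, v) ∈ E := by
    rw [hSk] at hvSk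
    simp only [Finset.mem_image, Finset.mem_filter] at hvSk
    obtain ⟨e, ⟨heE, he1⟩, he2⟩ := hvSk
    have : e = (k, v) := Prod.ext he1 he2
    rwa [this] at heE
  have hlvE : (l, v) ∉ E := by
    intro hmem
    apply hvSl
    rw [hSl]
    simp only [Finset.mem_image, Finset.mem_filter]
    exact ⟨(l, v), ⟨hmem, rfl⟩, rfl⟩
  refine ⟨insert (l, v) (E.erase (k, v)), fun u => ?_, fun w => ?_⟩
  · rw [Finset.filter_insert, Finset.filter_erase]
    by_cases huk : u = k
    · subst huk
      rw [if_neg (by simpa using hklne.symm)]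
      rw [Finset.card_erase_of_mem (by simp [hkvE])]
      rw [h1]
      simp [hklne.symm]
    · by_cases hul : u = l
      · subst hul
        rw [if_pos rfl]
        rw [Finset.erase_eq_of_notMem (by simp [hklne])]
        rw [Finset.card_insert_of_notMem (by simp [hlvE])]
        rw [h1]
        simp [hklne, huk]
      · rw [if_neg (by simpa using Ne.symm hul)]
        rw [Finset.erase_eq_of_notMem (by simp [Ne.symm huk])]
        rw [h1]
        simp [huk, hul]
  · rw [Finset.filter_insert, Finset.filter_erase]
    by_cases hwv : w = v
    · subst hwv
      rw [if_pos rfl]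
      rw [Finset.card_insert_of_notMem (by simp [hlvE])]
      rw [Finset.card_erase_of_mem (by simp [hkvE])]
      rw [h2]
      have : 1 ≤ (E.filter fun e => e.2 = w).card := by
        rw [Finset.one_le_card]
        exact ⟨(k, w), by simp [hkvE]⟩
      rw [h2] at this
      omega
    · rw [if_neg (by simpa using Ne.symm hwv)]
      rw [Finset.erase_eq_of_notMem (by simp [Ne.symm hwv])]
      exact h2 w

lemma sum_min_eq {n : ℕ} (c : Fin n → ℕ) (t : ℕ) :
    ∑ i, min (c i) t = ∑ s ∈ Finset.range t, (univ.filter fun i => s < c i).card := by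
  have h1 : ∀ i : Fin n, min (c i) t = ∑ s ∈ Finset.range t, (if s < c i then 1 else 0) := by
    intro i
    rw [← Finset.card_filter]
    have : (Finset.range t).filter (fun s => s < c i) = Finset.range (min (c i) t) := by
      ext s; simp only [Finset.mem_filter, Finset.mem_range, Finset.mem_range]
      omega
    rw [this, Finset.card_range]
  calc ∑ i, min (c i) t = ∑ i, ∑ s ∈ Finset.range t, (if s < c i then 1 else 0) := by
        exact Finset.sum_congr rfl fun i _ => h1 i
    _ = ∑ s ∈ Finset.range t, ∑ i, (if s < c i then 1 else 0) := Finset.sum_comm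
    _ = ∑ s ∈ Finset.range t, (univ.filter fun i => s < c i).card := by
        exact Finset.sum_congr rfl fun s _ => (Finset.card_filter _ _).symm

lemma sum_two_update {n : ℕ} (c : Fin n → ℕ) (k l : Fin n) (hkl : k ≠ l) (A B : ℕ)
    (f : ℕ → ℕ) :
    ∑ i, f ((fun i => if i = k then A else if i = l then B else c i) i) + (f (c k) + f (c l))
      = ∑ i, f (c i) + (f A + f B) := by
  have hdecomp : ∀ g : Fin n → ℕ,
      ∑ i, g i = g k + g l + ∑ i ∈ (univ.erase k).erase l, g i := by
    intro g
    have hl : l ∈ (univ : Finset (Fin n)).erase k := by simp [Ne.symm, hkl.symm]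
    rw [← Finset.add_sum_erase _ g (Finset.mem_univ k)]
    rw [← Finset.add_sum_erase _ g hl]
    ring
  rw [hdecomp (fun i => f ((fun i => if i = k then A else if i = l then B else c i) i)),
     hdecomp (fun i => f (c i))]
  have : ∑ i ∈ (univ.erase k).erase l,
      f ((fun i => if i = k then A else if i = l then B else c i) i)
      = ∑ i ∈ (univ.erase k).erase l, f (c i) := by
    apply Finset.sum_congr rfl
    intro i hi
    simp only [Finset.mem_erase] at hi
    simp [hi.1, hi.2.1]
  rw [this]
  simp [hkl, Ne.symm hkl]
  ring

theorem morphBG {n m : ℕ} (D₂ : Fin m → ℕ) (Φ : ℕ) :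
    ∀ (c y : Fin n → ℕ), (∑ i, (c i)^2 ≤ Φ) → BipartiteGraphic c D₂ →
    (∑ i, c i = ∑ i, y i) → (∀ t, ∑ i, min (c i) t ≤ ∑ i, min (y i) t) →
    BipartiteGraphic y D₂ := by
  induction Φ with
  | zero =>
    intro c y hΦ hg hsum hinv
    have hc0 : ∀ i, c i = 0 := by
      intro i
      have h1 : ∑ i, (c i)^2 = 0 := Nat.le_zero.1 hΦ
      have h2 := Finset.sum_eq_zero_iff.1 h1 i (Finset.mem_univ i)
      simpa [pow_eq_zero_iff] using h2
    have hy0 : ∀ i, y i = 0 := by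
      have : ∑ i, y i = 0 := by
        rw [← hsum]
        exact Finset.sum_eq_zero fun i _ => hc0 i
      intro i
      exact Finset.sum_eq_zero_iff.1 this i (Finset.mem_univ i)
    have : y = c := funext fun i => (hy0 i).trans (hc0 i).symm
    rwa [this]
  | succ Φ ih =>
    intro c y hΦ hg hsum hinv
    set Nc : ℕ → ℕ := fun s => (univ.filter fun i => s < c i).card with hNc
    set Ny : ℕ → ℕ := fun s => (univ.filter fun i => s < y i).card with hNy
    by_cases hcase : ∀ s, Nc s = Ny s
    · -- permutation case
      have split : ∀ f : Fin n → ℕ, ∀ s,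
          (univ.filter fun i => s < f i).card
            = (univ.filter fun i => f i = s+1).card + (univ.filter fun i => s+1 < f i).card := by
        intro f s
        rw [← Finset.card_union_of_disjoint (by
          rw [Finset.disjoint_left]
          intro i hi1 hi2
          simp only [Finset.mem_filter] at hi1 hi2
          omega)]
        congr 1
        ext i
        simp only [Finset.mem_filter, Finset.mem_union, Finset.mem_univ, true_and]
        omega
      have zero : ∀ f : Fin n → ℕ,
          (univ.filter fun i => f i = 0).card + (univ.filter fun i => 0 < f i).card
            = (univ : Finset (Fin n)).card := by
        intro f
        rw [← Finset.card_union_of_disjoint (by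
          rw [Finset.disjoint_left]
          intro i hi1 hi2
          simp only [Finset.mem_filter] at hi1 hi2
          omega)]
        congr 1
        ext i
        simp only [Finset.mem_filter, Finset.mem_union, Finset.mem_univ, true_and, iff_true]
        omega
      have hcounts : ∀ a : ℕ,
          (univ.filter fun i => c i = a).card = (univ.filter fun i => y i = a).card := by
        intro a
        match a with
        | 0 =>
          have h1 := zero c
          have h2 := zero y
          have h3 := hcase 0
          simp only [hNc, hNy] at h3
          omega
        | s+1 =>
          have h1 := split c s
          have h2 := split y s
          have h3 := hcase s
          have h4 := hcase (s+1)
          simp only [hNc, hNy] at h3 h4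
          omega
      obtain ⟨σ, hσ⟩ := perm_of_counts c y hcounts
      have : y = c ∘ σ.symm := by
        funext i
        simp only [Function.comp]
        rw [← hσ (σ.symm i), Equiv.apply_symm_apply]
      rw [this]
      exact relabelBG σ.symm hg
    · -- step case
      push_neg at hcase
      have hvanish : ∀ f : Fin n → ℕ, ∀ s, ∑ i, f i ≤ s →
          (univ.filter fun i => s < f i).card = 0 := by
        intro f s hs
        rw [Finset.card_eq_zero, Finset.filter_eq_empty_iff]
        intro i _
        have : f i ≤ ∑ j, f j := Finset.single_le_sum (fun j _ => Nat.zero_le _) (Finset.mem_univ i)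
        omega
      have hmemT : ∀ s, Nc s ≠ Ny s → s < ∑ i, c i := by
        intro s hne
        by_contra hcon
        push_neg at hcon
        have h1 := hvanish c s hcon
        have h2 := hvanish y s (hsum ▸ hcon)
        simp only [hNc, hNy] at hne
        omega
      set T : Finset ℕ := (Finset.range (∑ i, c i)).filter (fun s => Nc s ≠ Ny s) with hT
      have hTne : T.Nonempty := by
        obtain ⟨s, hs⟩ := hcase
        exact ⟨s, by simp [hT, Finset.mem_filter, hmemT s hs, hs]⟩
      set b : ℕ := T.max' hTne with hb
      have hbmem : b ∈ T := T.max'_mem hTne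
      have hbne : Nc b ≠ Ny b := (Finset.mem_filter.1 hbmem).2
      have hbtop : ∀ s, b < s → Nc s = Ny s := by
        intro s hs
        by_contra hne
        have : s ∈ T := Finset.mem_filter.2 ⟨Finset.mem_range.2 (hmemT s hne), hne⟩
        have := Finset.le_max' T s this
        omega
      -- partial sums
      have key : ∀ t, ∑ s ∈ Finset.range t, Nc s ≤ ∑ s ∈ Finset.range t, Ny s := by
        intro t
        have h1 := sum_min_eq c t
        have h2 := sum_min_eq y t
        have := hinv t
        simp only [hNc, hNy]
        omega
      have htot : ∀ T1, ∑ i, c i ≤ T1 →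
          (∑ s ∈ Finset.range T1, Nc s = ∑ i, c i ∧ ∑ s ∈ Finset.range T1, Ny s = ∑ i, c i) := by
        intro T1 hT1
        constructor
        · rw [← sum_min_eq c T1]
          apply Finset.sum_congr rfl
          intro i _
          have : c i ≤ ∑ j, c j := Finset.single_le_sum (fun j _ => Nat.zero_le _) (Finset.mem_univ i)
          omega
        · rw [← sum_min_eq y T1, hsum]
          apply Finset.sum_congr rfl
          intro i _
          have : y i ≤ ∑ j, y j := Finset.single_le_sum (fun j _ => Nat.zero_le _) (Finset.mem_univ i)
          omega
      have hsplitsum : ∀ (N : ℕ → ℕ) t T1, t ≤ T1 →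
          ∑ s ∈ Finset.range T1, N s = ∑ s ∈ Finset.range t, N s + ∑ s ∈ Finset.Ico t T1, N s := by
        intro N t T1 ht
        simp only [Finset.range_eq_Ico]
        rw [← Finset.sum_Ico_consecutive N (Nat.zero_le t) ht]
      have heqb1 : ∑ s ∈ Finset.range (b+1), Nc s = ∑ s ∈ Finset.range (b+1), Ny s := by
        set T1 := b + 1 + ∑ i, c i with hT1def
        have hT1 : ∑ i, c i ≤ T1 := by omega
        have hb1 : b + 1 ≤ T1 := by omega
        obtain ⟨e1, e2⟩ := htot T1 hT1
        have s1 := hsplitsum Nc (b+1) T1 hb1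
        have s2 := hsplitsum Ny (b+1) T1 hb1
        have htail : ∑ s ∈ Finset.Ico (b+1) T1, Nc s = ∑ s ∈ Finset.Ico (b+1) T1, Ny s := by
          apply Finset.sum_congr rfl
          intro s hs
          exact hbtop s (by simp only [Finset.mem_Ico] at hs; omega)
        omega
      have hNcb_gt : Ny b < Nc b := by
        have h1 := key b
        have h2 : ∑ s ∈ Finset.range (b+1), Nc s = ∑ s ∈ Finset.range b, Nc s + Nc b :=
          Finset.sum_range_succ Nc b
        have h3 : ∑ s ∈ Finset.range (b+1), Ny s = ∑ s ∈ Finset.range b, Ny s + Ny b :=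
          Finset.sum_range_succ Ny b
        omega
      have hmono : ∀ (f : Fin n → ℕ) s s', s ≤ s' →
          (univ.filter fun i => s' < f i).card ≤ (univ.filter fun i => s < f i).card := by
        intro f s s' hss
        apply Finset.card_le_card
        intro i hi
        simp only [Finset.mem_filter] at hi ⊢
        exact ⟨hi.1, by omega⟩
      -- find k with c k = b + 1
      have hNcb1 : Nc (b+1) < Nc b := by
        have h1 := hbtop (b+1) (by omega)
        have h2 : Ny (b+1) ≤ Ny b := hmono y b (b+1) (by omega)
        omega
      have hk : ∃ k, c k = b + 1 := by
        have hsub : (univ.filter fun i => b+1 < c i) ⊆ (univ.filter fun i => b < c i) := by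
          intro i hi
          simp only [Finset.mem_filter] at hi ⊢
          exact ⟨hi.1, by omega⟩
        have hne : ¬ ((univ.filter fun i => b < c i) ⊆ (univ.filter fun i => b+1 < c i)) := by
          intro hcon
          have := Finset.card_le_card hcon
          simp only [hNc] at hNcb1
          omega
        obtain ⟨k, hk1, hk2⟩ := Finset.not_subset.1 hne
        simp only [Finset.mem_filter, Finset.mem_univ, true_and, not_lt] at hk1 hk2
        exact ⟨k, by omega⟩
      obtain ⟨k, hck⟩ := hk
      -- find a, the largest level with Nc < Ny
      have hexlt : ∃ s, Nc s < Ny s := by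
        by_contra hcon
        push_neg at hcon
        have : ∑ s ∈ Finset.range (b+1), Ny s < ∑ s ∈ Finset.range (b+1), Nc s := by
          apply Finset.sum_lt_sum (fun s _ => hcon s)
          exact ⟨b, Finset.self_mem_range_succ b, hNcb_gt⟩
        omega
      set A : Finset ℕ := (Finset.range (b+1)).filter (fun s => Nc s < Ny s) with hA
      have hAne : A.Nonempty := by
        obtain ⟨s, hs⟩ := hexlt
        have hsb : s ≤ b := by
          by_contra hcon
          push_neg at hcon
          have := hbtop s hcon
          omega
        exact ⟨s, Finset.mem_filter.2 ⟨Finset.mem_range.2 (by omega), hs⟩⟩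
      set a : ℕ := A.max' hAne with ha
      have hamem : a ∈ A := A.max'_mem hAne
      have haprop : Nc a < Ny a := (Finset.mem_filter.1 hamem).2
      have hab : a < b := by
        have : a ≤ b := by
          have := (Finset.mem_filter.1 hamem).1
          simp only [Finset.mem_range] at this
          omega
        rcases Nat.lt_or_ge a b with h | h
        · exact h
        · have : a = b := by omega
          rw [this] at haprop
          omega
      have hamax : ∀ s, a < s → Ny s ≤ Nc s := by
        intro s hs
        rcases Nat.lt_or_ge b s with h | h
        · rw [hbtop s h]
        · by_contra hcon
          push_neg at hcon
          have : s ∈ A := Finset.mem_filter.2 ⟨Finset.mem_range.2 (by omega), hcon⟩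
          have := Finset.le_max' A s this
          omega
      -- find l, the entry with largest value ≤ a
      have hlex : ∃ l, c l ≤ a := by
        have h1 : Ny a ≤ n := by
          have := Finset.card_filter_le (univ : Finset (Fin n)) (fun i => a < y i)
          simpa [hNy] using this
        have h2 : Nc a < n := by omega
        by_contra hcon
        push_neg at hcon
        have : (univ.filter fun i => a < c i) = univ := by
          apply Finset.eq_univ_iff_forall.2
          intro i
          simp only [Finset.mem_filter, Finset.mem_univ, true_and]
          exact hcon i
        simp only [hNc] at h2
        rw [this, Finset.card_univ, Fintype.card_fin] at h2
        omega
      have hLne : (univ.filter fun i => c i ≤ a).Nonempty := by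
        obtain ⟨l, hl⟩ := hlex
        exact ⟨l, by simp [hl]⟩
      obtain ⟨l, hlmem, hlmax⟩ := Finset.exists_max_image _ c hLne
      simp only [Finset.mem_filter, Finset.mem_univ, true_and] at hlmem
      have hlmax' : ∀ i, c i ≤ a → c i ≤ c l := by
        intro i hi
        exact hlmax i (by simp [hi])
      have hkl : k ≠ l := by
        intro hcon
        rw [hcon] at hck
        omega
      -- Nc is constant on [c l, a]
      have hconst : ∀ s, c l ≤ s → s ≤ a → Nc s = Nc a := by
        intro s hs1 hs2
        simp only [hNc]
        congr 1
        ext i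
        simp only [Finset.mem_filter, Finset.mem_univ, true_and]
        constructor
        · intro hi
          rcases Nat.lt_or_ge a (c i) with h | h
          · omega
          · have := hlmax' i h
            omega
        · intro hi; omega
      -- the transfer
      have hclck : c l < c k := by omega
      have hg' := transferBG hclck hg
      have hsum_id : (∑ i, (if i = k then c k - 1 else if i = l then c l + 1 else c i))
          + (c k + c l) = (∑ i, c i) + ((c k - 1) + (c l + 1)) :=
        sum_two_update c k l hkl (c k - 1) (c l + 1) id
      have hsum' : (∑ i, (if i = k then c k - 1 else if i = l then c l + 1 else c i))
          = ∑ i, c i := by omega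
      have hsq : (∑ i, (if i = k then c k - 1 else if i = l then c l + 1 else c i)^2)
          + ((c k)^2 + (c l)^2)
          = (∑ i, (c i)^2) + ((c k - 1)^2 + (c l + 1)^2) :=
        sum_two_update c k l hkl (c k - 1) (c l + 1) (fun x => x^2)
      have hsq_ineq : (c k - 1)^2 + (c l + 1)^2 < (c k)^2 + (c l)^2 := by
        have h1 : c l + 1 < c k := by omega
        have h2 : c k - 1 + 1 = c k := by omega
        nlinarith [h2, h1]
      have hΦ' : (∑ i, (if i = k then c k - 1 else if i = l then c l + 1 else c i)^2) ≤ Φ := by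
        omega
      -- the new invariant
      have hinv' : ∀ t, (∑ i, min (if i = k then c k - 1 else if i = l then c l + 1 else c i) t)
          ≤ ∑ i, min (y i) t := by
        intro t
        have hdec : (∑ i, min (if i = k then c k - 1 else if i = l then c l + 1 else c i) t)
            + (min (c k) t + min (c l) t)
            = (∑ i, min (c i) t) + (min (c k - 1) t + min (c l + 1) t) :=
          sum_two_update c k l hkl (c k - 1) (c l + 1) (fun x => min x t)
        by_cases ht1 : t ≤ c l
        · have e1 : min (c l) t = t := by omega
          have e2 : min (c l + 1) t = t := by omega
          have e3 : min (c k) t = t := by omega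
          have e4 : min (c k - 1) t = t := by omega
          have := hinv t
          omega
        · by_cases ht2 : b + 1 ≤ t
          · have e1 : min (c k) t = c k := by omega
            have e2 : min (c k - 1) t = c k - 1 := by omega
            have e3 : min (c l) t = c l := by omega
            have e4 : min (c l + 1) t = c l + 1 := by omega
            have := hinv t
            omega
          · -- c l < t ≤ b : need strictness
            have hstrict : ∑ i, min (c i) t < ∑ i, min (y i) t := by
              have h1 := sum_min_eq c t
              have h2 := sum_min_eq y t
              have hgoal : ∑ s ∈ Finset.range t, Nc s < ∑ s ∈ Finset.range t, Ny s := by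
                by_cases hta : t ≤ a
                · have h0 := key (c l)
                  have hsp1 := hsplitsum Nc (c l) t (by omega)
                  have hsp2 := hsplitsum Ny (c l) t (by omega)
                  have hterm : ∀ s ∈ Finset.Ico (c l) t, Nc s + 1 ≤ Ny s := by
                    intro s hs
                    simp only [Finset.mem_Ico] at hs
                    have e1 : Nc s = Nc a := hconst s hs.1 (by omega)
                    have e2 : Ny a ≤ Ny s := hmono y s a (by omega)
                    have e3 := haprop
                    omega
                  have hsumterm : ∑ s ∈ Finset.Ico (c l) t, Nc s + (t - c l)
                      ≤ ∑ s ∈ Finset.Ico (c l) t, Ny s := by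
                    have := Finset.sum_le_sum hterm
                    rw [Finset.sum_add_distrib] at this
                    simp only [Finset.sum_const, Nat.card_Ico, smul_eq_mul, mul_one] at this
                    omega
                  omega
                · push_neg at hta
                  have hsp1 := hsplitsum Nc t (b+1) (by omega)
                  have hsp2 := hsplitsum Ny t (b+1) (by omega)
                  have htail : ∑ s ∈ Finset.Ico t (b+1), Ny s < ∑ s ∈ Finset.Ico t (b+1), Nc s := by
                    apply Finset.sum_lt_sum
                    · intro s hs
                      simp only [Finset.mem_Ico] at hs
                      exact hamax s (by omega)
                    · exact ⟨b, Finset.mem_Ico.2 ⟨by omega, by omega⟩, hNcb_gt⟩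
                  omega
              simp only [hNc, hNy] at hgoal
              omega
            have e1 : min (c k) t = t := by omega
            have e2 : min (c k - 1) t = t := by omega
            have e3 : min (c l) t = c l := by omega
            have e4 : min (c l + 1) t = c l + 1 := by omega
            omega
      exact ih _ y hΦ' hg' (hsum'.trans hsum) hinv'

lemma card_filter_val_lt {n a : ℕ} (ha : a ≤ n) :
    ((univ : Finset (Fin n)).filter fun i : Fin n => (i : ℕ) < a).card = a := by
  have : ((univ : Finset (Fin n)).filter fun i : Fin n => (i : ℕ) < a)
      = Finset.map (Fin.castLEEmb ha) univ := by
    ext i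
    simp only [Finset.mem_filter, Finset.mem_univ, true_and, Finset.mem_map]
    constructor
    · intro hi
      exact ⟨⟨i, hi⟩, by simp [Fin.castLEEmb, Fin.castLE, Fin.ext_iff]⟩
    · rintro ⟨j, -, rfl⟩
      simpa using j.isLt
  rw [this, Finset.card_map, Finset.card_univ, Fintype.card_fin]

lemma arith_helper (X SA Sy Ac n a dmax dmin d t : ℕ)
    (f1 : X + Ac * t = SA) (f4 : SA + (n - Ac) * dmin ≤ Sy)
    (hsy : Sy = a * dmax + d + (n - 1 - a) * dmin)
    (hAc : a < Ac) (hAn : Ac ≤ n) (htd : dmin ≤ t) (htle : t ≤ dmax) (ha : a < n) :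
    X ≤ a * (dmax - t) + (d - t) := by
  have hn1 : a ≤ n - 1 := by omega
  have hn2 : 1 ≤ n := by omega
  have hprod : (0:ℤ) ≤ ((Ac : ℤ) - 1 - a) * ((t : ℤ) - dmin) := by
    apply mul_nonneg
    · have : (a:ℤ) + 1 ≤ Ac := by exact_mod_cast hAc
      omega
    · have : (dmin:ℤ) ≤ t := by exact_mod_cast htd
      omega
  rcases le_or_gt t d with htd2 | htd2
  · zify [htle, hAn, hn1, hn2, htd2] at f1 f4 hsy ⊢
    nlinarith [hprod, f1, f4, hsy]
  · have hz : d - t = 0 := Nat.sub_eq_zero_of_le (le_of_lt htd2)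
    rw [hz]
    zify [htle, hAn, hn1, hn2] at f1 f4 hsy ⊢
    nlinarith [hprod, f1, f4, hsy]

lemma extremal_inv {n : ℕ} (a dmax dmin d : ℕ) (ha : a < n) (hd1 : dmin ≤ d) (hd2 : d ≤ dmax)
    (R y : Fin n → ℕ)
    (hR : ∀ i : Fin n, R i = if (i:ℕ) < a then dmax else if (i:ℕ) = a then d else dmin)
    (hy : ∀ i, dmin ≤ y i ∧ y i ≤ dmax)
    (hsum : ∑ i, y i = ∑ i, R i) :
    ∀ t, ∑ i, min (R i) t ≤ ∑ i, min (y i) t := by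
  -- the three blocks
  set Fa : Finset (Fin n) := univ.filter (fun i : Fin n => (i : ℕ) < a) with hFa
  have hcardFa : Fa.card = a := card_filter_val_lt (le_of_lt ha)
  have hFbmem : (⟨a, ha⟩ : Fin n) ∉ Fa := by simp [hFa]
  have hRFa : ∀ i ∈ Fa, R i = dmax := by
    intro i hi
    simp only [hFa, Finset.mem_filter] at hi
    rw [hR i, if_pos hi.2]
  have hRa : R ⟨a, ha⟩ = d := by
    rw [hR ⟨a, ha⟩]
    simp
  have hdminR : ∀ i, dmin ≤ R i := by
    intro i
    rw [hR i]
    split_ifs <;> omega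
  -- sum of R
  have hRsum : ∑ i, R i = a * dmax + d + (n - 1 - a) * dmin := by
    have h1 : ∑ i ∈ insert (⟨a, ha⟩ : Fin n) Fa, R i = d + a * dmax := by
      rw [Finset.sum_insert hFbmem, hRa]
      congr 1
      rw [Finset.sum_congr rfl hRFa, Finset.sum_const, hcardFa, smul_eq_mul]
    have h2 : ∑ i ∈ (insert (⟨a, ha⟩ : Fin n) Fa)ᶜ, R i = (n - 1 - a) * dmin := by
      have hcc : ∀ i ∈ (insert (⟨a, ha⟩ : Fin n) Fa)ᶜ, R i = dmin := by
        intro i hi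
        simp only [Finset.mem_compl, Finset.mem_insert, hFa, Finset.mem_filter,
          Finset.mem_univ, true_and, not_or, Fin.ext_iff] at hi
        rw [hR i, if_neg hi.2, if_neg hi.1]
      rw [Finset.sum_congr rfl hcc, Finset.sum_const, smul_eq_mul]
      congr 1
      have : (insert (⟨a, ha⟩ : Fin n) Fa).card = a + 1 := by
        rw [Finset.card_insert_of_notMem hFbmem, hcardFa]
      rw [Finset.card_compl, this, Fintype.card_fin]
      omega
    have h3 := Finset.sum_add_sum_compl (insert (⟨a, ha⟩ : Fin n) Fa) R
    omega
  intro t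
  -- convert min-form to subtraction form
  have hidR : ∑ i, min (R i) t + ∑ i, (R i - t) = ∑ i, R i := by
    rw [← Finset.sum_add_distrib]
    exact Finset.sum_congr rfl fun i _ => by omega
  have hidY : ∑ i, min (y i) t + ∑ i, (y i - t) = ∑ i, y i := by
    rw [← Finset.sum_add_distrib]
    exact Finset.sum_congr rfl fun i _ => by omega
  have hmain : ∑ i, (y i - t) ≤ ∑ i, (R i - t) := by
    rcases Nat.lt_or_ge t dmin with htd | htd
    · -- t < dmin : both are full sums
      have e1 : ∑ i, ((y i - t) + t) = ∑ i, y i := Finset.sum_congr rfl fun i _ => by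
        have := (hy i).1; omega
      have e2 : ∑ i, ((R i - t) + t) = ∑ i, R i := Finset.sum_congr rfl fun i _ => by
        have := hdminR i; omega
      rw [Finset.sum_add_distrib] at e1 e2
      omega
    · -- dmin ≤ t
      set A : Finset (Fin n) := univ.filter (fun i => t < y i) with hA
      have hLHS : ∑ i, (y i - t) = ∑ i ∈ A, (y i - t) := by
        symm
        apply Finset.sum_subset (Finset.filter_subset _ _)
        intro i _ hiA
        simp only [hA, Finset.mem_filter, Finset.mem_univ, true_and, not_lt] at hiA
        omega
      have hRB : a * (dmax - t) + (d - t) ≤ ∑ i, (R i - t) := by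
        have hsub : insert (⟨a, ha⟩ : Fin n) Fa ⊆ univ := Finset.subset_univ _
        have h1 : ∑ i ∈ insert (⟨a, ha⟩ : Fin n) Fa, (R i - t) = (d - t) + a * (dmax - t) := by
          rw [Finset.sum_insert hFbmem, hRa]
          congr 1
          rw [Finset.sum_congr rfl (fun i hi => by rw [hRFa i hi]), Finset.sum_const,
            hcardFa, smul_eq_mul]
        calc a * (dmax - t) + (d - t) = ∑ i ∈ insert (⟨a, ha⟩ : Fin n) Fa, (R i - t) := by omega
          _ ≤ ∑ i, (R i - t) := Finset.sum_le_sum_of_subset hsub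
      rcases le_or_gt A.card a with hAc | hAc
      · -- few entries above t
        have h1 : ∑ i ∈ A, (y i - t) ≤ A.card * (dmax - t) := by
          calc ∑ i ∈ A, (y i - t) ≤ ∑ i ∈ A, (dmax - t) := Finset.sum_le_sum fun i _ => by
                have := (hy i).2; omega
            _ = A.card * (dmax - t) := by rw [Finset.sum_const, smul_eq_mul]
        have h2 : A.card * (dmax - t) ≤ a * (dmax - t) := Nat.mul_le_mul_right _ hAc
        omega
      · -- many entries above t
        have htle : t ≤ dmax := by
          obtain ⟨i, hi⟩ : A.Nonempty := Finset.card_pos.1 (by omega)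
          simp only [hA, Finset.mem_filter, Finset.mem_univ, true_and] at hi
          have := (hy i).2
          omega
        have hAn : A.card ≤ n := by
          have := Finset.card_filter_le (univ : Finset (Fin n)) (fun i => t < y i)
          simpa [hA, Finset.card_univ] using this
        have f1 : ∑ i ∈ A, ((y i - t) + t) = ∑ i ∈ A, y i := Finset.sum_congr rfl fun i hi => by
          simp only [hA, Finset.mem_filter] at hi
          omega
        rw [Finset.sum_add_distrib, Finset.sum_const, smul_eq_mul] at f1
        have f2 : ∑ i ∈ A, y i + ∑ i ∈ Aᶜ, y i = ∑ i, y i := Finset.sum_add_sum_compl A y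
        have f3 : (n - A.card) * dmin ≤ ∑ i ∈ Aᶜ, y i := by
          calc (n - A.card) * dmin = ∑ _i ∈ Aᶜ, dmin := by
                rw [Finset.sum_const, smul_eq_mul, Finset.card_compl, Fintype.card_fin]
            _ ≤ ∑ i ∈ Aᶜ, y i := Finset.sum_le_sum fun i _ => (hy i).1
        have f4 : ∑ i ∈ A, y i + (n - A.card) * dmin ≤ ∑ i, y i := by omega
        have hsy : ∑ i, y i = a * dmax + d + (n - 1 - a) * dmin := by omega
        have hgoal : ∑ i ∈ A, (y i - t) ≤ a * (dmax - t) + (d - t) :=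
          arith_helper _ _ _ _ n a dmax dmin d t f1 f4 hsy hAc hAn htd htle ha
        omega
  omega

/-- Let `(D₁, D₂)` be a graphic bipartite degree sequence on `n + m` vertices where
`D₁ = (d₁max, …, d₁max, d₁, d₁min, …, d₁min)` (with `a₁` maximal entries, one entry `d₁`
with `d₁min ≤ d₁ ≤ d₁max`, and the rest minimal) and similarly for `D₂`.
If `(D₁', D₂')` is a bipartite degree sequence on `n + m` vertices with all entries of `Dₖ'`
between `dₖmin` and `dₖmax` and the same class degree sums as `(D₁, D₂)`, then `(D₁', D₂')`
is also graphic. -/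
theorem statement3 {n m : ℕ} (a₁ a₂ d₁max d₁min d₁ d₂max d₂min d₂ : ℕ)
    (ha₁ : a₁ < n) (ha₂ : a₂ < m)
    (hd₁ : d₁min ≤ d₁ ∧ d₁ ≤ d₁max) (hd₂ : d₂min ≤ d₂ ∧ d₂ ≤ d₂max)
    (D₁ : Fin n → ℕ) (D₂ : Fin m → ℕ)
    (hD₁ : ∀ i : Fin n,
      D₁ i = if (i : ℕ) < a₁ then d₁max else if (i : ℕ) = a₁ then d₁ else d₁min)
    (hD₂ : ∀ j : Fin m,
      D₂ j = if (j : ℕ) < a₂ then d₂max else if (j : ℕ) = a₂ then d₂ else d₂min)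
    (hgraphic : BipartiteGraphic D₁ D₂)
    (D₁' : Fin n → ℕ) (D₂' : Fin m → ℕ)
    (hb₁ : ∀ i, d₁min ≤ D₁' i ∧ D₁' i ≤ d₁max)
    (hb₂ : ∀ j, d₂min ≤ D₂' j ∧ D₂' j ≤ d₂max)
    (hs₁ : ∑ i, D₁' i = ∑ i, D₁ i)
    (hs₂ : ∑ j, D₂' j = ∑ j, D₂ j) :
    BipartiteGraphic D₁' D₂' := by
  have hinv1 : ∀ t, ∑ i, min (D₁ i) t ≤ ∑ i, min (D₁' i) t :=
    extremal_inv a₁ d₁max d₁min d₁ ha₁ hd₁.1 hd₁.2 D₁ D₁' hD₁ hb₁ hs₁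
  have step1 : BipartiteGraphic D₁' D₂ :=
    morphBG D₂ (∑ i, (D₁ i)^2) D₁ D₁' le_rfl hgraphic hs₁.symm hinv1
  have step2 : BipartiteGraphic D₂ D₁' := swapBG step1
  have hinv2 : ∀ t, ∑ j, min (D₂ j) t ≤ ∑ j, min (D₂' j) t :=
    extremal_inv a₂ d₂max d₂min d₂ ha₂ hd₂.1 hd₂.2 D₂ D₂' hD₂ hb₂ hs₂
  have step3 : BipartiteGraphic D₂' D₁' :=
    morphBG D₁' (∑ j, (D₂ j)^2) D₂ D₂' le_rfl step2 hs₂.symm hinv2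
  exact swapBG step3
end

section
/- Let D = (D₁, D₂, D₃) be a graphic tripartite 3-uniform hypergraph degree sequence on n₁ + n₂ + n₃ vertices such that for each k = 1, 2, 3, the sequence Dₖ consists of some number of entries equal to d_{k,max}, one entry dₖ with d_{k,min} ≤ dₖ ≤ d_{k,max}, and the remaining entries equal to d_{k,min}. Let D' = (D₁', D₂', D₃') be a tripartite degree sequence on n₁ + n₂ + n₃ vertices such that for each k = 1, 2, 3, every entry of Dₖ' lies between d_{k,min} and d_{k,max} and the sum of the entries of Dₖ' equals the sum of the entries of Dₖ. Then D' is also a graphic tripartite 3-uniform hypergraph degree sequence. -/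
open Finset

theorem Finset.card_filter_insert_erase_add {α : Type*} [DecidableEq α] {s : Finset α} {u w : α}
    (hu : u ∈ s) (hw : w ∉ s) (p : α → Prop) [DecidablePred p] :
    #((insert w (s.erase u)).filter p) + (if p u then 1 else 0) =
      #(s.filter p) + (if p w then 1 else 0) := by
  rw [card_filter, card_filter, sum_insert fun h => hw (mem_of_mem_erase h),
    ← add_sum_erase s _ hu]
  ring

section Majorization

variable {ι : Type*} [LinearOrder ι] [LocallyFiniteOrderBot ι]

theorem sum_Iic_le_sum_Iic_of_le_or_ge [Fintype ι] {C T : ι → ℕ} (hsum : ∑ l, T l = ∑ l, C l)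
    (k : ι) (h : (∀ l ≤ k, T l ≤ C l) ∨ ∀ l, k < l → C l ≤ T l) :
    ∑ l ∈ Iic k, T l ≤ ∑ l ∈ Iic k, C l := by
  rcases h with hle | hge
  · exact sum_le_sum fun l hl => hle l (mem_Iic.1 hl)
  · have hsplit := fun f : ι → ℕ => sum_filter_add_sum_filter_not univ (· ≤ k) f
    simp only [filter_ge_eq_Iic] at hsplit
    have htail : ∑ l with ¬l ≤ k, C l ≤ ∑ l with ¬l ≤ k, T l :=
      sum_le_sum fun l hl => hge l (not_le.1 (mem_filter.1 hl).2)
    have := hsplit T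
    have := hsplit C
    omega

theorem exists_shift_of_sum_Iic_le [Fintype ι] {C T : ι → ℕ}
    (hmaj : ∀ k, ∑ l ∈ Iic k, T l ≤ ∑ l ∈ Iic k, C l) (hsum : ∑ l, T l = ∑ l, C l) (hne : C ≠ T) :
    ∃ (X : ι → ℕ) (i j : ι),
      C = X + Pi.single i 1 ∧ i < j ∧ X j < T j ∧ ∀ l < j, T l ≤ X l := by
  have hlow : ∃ j, C j < T j := by
    by_contra! h
    exact hne (funext fun l => ((sum_eq_sum_iff_of_le fun l _ => h l).1 hsum l
      (mem_univ l)).symm)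
  obtain ⟨j, hj, hjmin⟩ := wellFounded_lt.has_min {j | C j < T j} hlow
  replace hjmin : ∀ l < j, T l ≤ C l := fun l hl => not_lt.1 fun h => hjmin l h hl
  obtain ⟨i, hi, hTi⟩ : ∃ i ∈ Iio j, T i < C i := by
    refine exists_lt_of_sum_lt ?_
    have := hmaj j
    rw [← Iio_insert, sum_insert notMem_Iio_self, sum_insert notMem_Iio_self] at this
    exact lt_of_add_lt_add_left (this.trans_lt (by simpa using hj))
  refine ⟨C - Pi.single i 1, i, j, ?_, mem_Iio.1 hi, ?_, fun l hl => ?_⟩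
  · funext l
    by_cases hl : l = i
    · subst hl; simp only [Pi.add_apply, Pi.sub_apply, Pi.single_eq_same]; omega
    · simp [hl]
  · simpa [(mem_Iio.1 hi).ne'] using hj
  · by_cases hli : l = i
    · subst hli; simp only [Pi.sub_apply, Pi.single_eq_same]; omega
    · simpa [hli] using hjmin l hl

theorem sum_Iic_le_sum_Iic_add_single {X T : ι → ℕ} {i j : ι} (hij : i ≤ j)
    (hlt : ∀ l < j, T l ≤ X l)
    (hmaj : ∀ k, ∑ l ∈ Iic k, T l ≤ ∑ l ∈ Iic k, (X + Pi.single i 1 : ι → ℕ) l)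
    (k : ι) : ∑ l ∈ Iic k, T l ≤ ∑ l ∈ Iic k, (X + Pi.single j 1 : ι → ℕ) l := by
  by_cases hjk : j ≤ k
  · have hik : i ≤ k := hij.trans hjk
    simpa [sum_add_distrib, sum_pi_single', hjk, hik] using hmaj k
  · refine sum_le_sum fun l hl => ?_
    exact (hlt l ((mem_Iic.1 hl).trans_lt (not_le.1 hjk))).trans le_self_add

end Majorization

namespace TripartiteGraphic

variable {n₁ n₂ n₃ : ℕ} {D₁ : Fin n₁ → ℕ} {D₂ : Fin n₂ → ℕ} {D₃ : Fin n₃ → ℕ}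

theorem rotate (h : TripartiteGraphic D₁ D₂ D₃) : TripartiteGraphic D₂ D₃ D₁ := by
  obtain ⟨E, h₁, h₂, h₃⟩ := h
  refine ⟨E.map ⟨fun e => (e.2.1, e.2.2, e.1), fun e f hef => ?_⟩, ?_, ?_, ?_⟩
  · simp only [Prod.mk.injEq] at hef
    exact Prod.ext hef.2.2 (Prod.ext hef.1 hef.2.1)
  all_goals intro v; rw [filter_map, card_map]
  exacts [h₂ v, h₃ v, h₁ v]

theorem comp_perm (h : TripartiteGraphic D₁ D₂ D₃) (σ : Equiv.Perm (Fin n₁)) :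
    TripartiteGraphic (D₁ ∘ σ) D₂ D₃ := by
  obtain ⟨E, h₁, h₂, h₃⟩ := h
  let f : Fin n₁ × Fin n₂ × Fin n₃ ≃ Fin n₁ × Fin n₂ × Fin n₃ :=
    σ.symm.prodCongr (Equiv.refl _)
  refine ⟨E.map f.toEmbedding, fun a => ?_, fun b => ?_, fun c => ?_⟩
  all_goals rw [filter_map, card_map]
  · simpa [f, Function.comp_def, Equiv.symm_apply_eq] using h₁ (σ a)
  · exact h₂ b
  · exact h₃ c

/-- The switch replaces a hyperedge `(i, b, c)` by `(j, b, c)`; such a pair of triples exists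
because `i` has more neighbouring pairs `(b, c)` than `j`. -/
theorem shift_unit {X : Fin n₁ → ℕ} {i j : Fin n₁} (hij : X j ≤ X i)
    (h : TripartiteGraphic (X + Pi.single i 1) D₂ D₃) :
    TripartiteGraphic (X + Pi.single j 1) D₂ D₃ := by
  rcases eq_or_ne i j with rfl | hne
  · exact h
  obtain ⟨E, h₁, h₂, h₃⟩ := h
  obtain ⟨e, he, hei, hj⟩ : ∃ e ∈ E, e.1 = i ∧ (j, e.2) ∉ E := by
    by_contra! hall
    have hcard := card_le_card_of_injOn (s := E.filter fun e => e.1 = i)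
      (t := E.filter fun e => e.1 = j) (fun e => (j, e.2))
      (fun e he => mem_filter.2 ⟨hall e (mem_filter.1 he).1 (mem_filter.1 he).2, rfl⟩)
      (fun e he f hf hef => Prod.ext (((mem_filter.1 he).2).trans (mem_filter.1 hf).2.symm)
        (Prod.ext_iff.1 hef).2)
    rw [h₁, h₁] at hcard
    simp only [Pi.add_apply, Pi.single_eq_same, Pi.single_eq_of_ne hne.symm] at hcard
    omega
  refine ⟨insert (j, e.2) (E.erase e), fun a => ?_, fun b => ?_, fun c => ?_⟩
  · have := card_filter_insert_erase_add he hj fun e => e.1 = a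
    rw [h₁] at this
    simp only [Pi.add_apply, Pi.single_apply, hei] at this ⊢
    split_ifs at this ⊢ <;> omega
  · have := card_filter_insert_erase_add he hj fun e => e.2.1 = b
    rw [h₂] at this
    simpa using this
  · have := card_filter_insert_erase_add he hj fun e => e.2.2 = c
    rw [h₃] at this
    simpa using this

theorem of_sum_Iic_le {C T : Fin n₁ → ℕ} (hT : Antitone T)
    (hmaj : ∀ k, ∑ l ∈ Iic k, T l ≤ ∑ l ∈ Iic k, C l) (hsum : ∑ l, T l = ∑ l, C l)
    (h : TripartiteGraphic C D₂ D₃) : TripartiteGraphic T D₂ D₃ := by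
  induction hN : ∑ l, (C l - T l) using Nat.strong_induction_on generalizing C with
  | _ N ih =>
  by_cases hCT : C = T
  · exact hCT ▸ h
  obtain ⟨X, i, j, rfl, hij, hj, hlt⟩ := exists_shift_of_sum_Iic_le hmaj hsum hCT
  have hi : T i ≤ X i := hlt i hij
  have hdecr : ∑ l, ((X + Pi.single j 1 : Fin n₁ → ℕ) l - T l) < N := by
    rw [← hN]
    refine sum_lt_sum (fun l _ => ?_) ⟨i, mem_univ i, ?_⟩
    · by_cases hl : l = j
      · subst hl; simp only [Pi.add_apply, Pi.single_eq_same, Pi.single_eq_of_ne hij.ne']; omega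
      · by_cases hli : l = i
        · subst hli; simp only [Pi.add_apply, Pi.single_eq_same, Pi.single_eq_of_ne hl]; omega
        · simp [hl, hli]
    · simp only [Pi.add_apply, Pi.single_eq_same, Pi.single_eq_of_ne hij.ne]; omega
  refine ih _ hdecr ?_ ?_ (shift_unit ?_ h) rfl
  · exact sum_Iic_le_sum_Iic_add_single hij.le hlt hmaj
  · simpa [sum_add_distrib] using hsum
  · exact hj.le.trans ((hT hij.le).trans hi)

theorem of_threshold {C : Fin n₁ → ℕ} {a dmax dmin d : ℕ}
    (hC : ∀ i : Fin n₁, C i = if (i : ℕ) < a then dmax else if (i : ℕ) = a then d else dmin)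
    (h : TripartiteGraphic C D₂ D₃) {T : Fin n₁ → ℕ} (hb : ∀ i, dmin ≤ T i ∧ T i ≤ dmax)
    (hs : ∑ i, T i = ∑ i, C i) : TripartiteGraphic T D₂ D₃ := by
  let σ := Tuple.sort (OrderDual.toDual ∘ T)
  have hanti : Antitone (T ∘ σ) := monotone_toDual_comp_iff.1 (Tuple.monotone_sort _)
  have hsσ : ∑ i, (T ∘ σ) i = ∑ i, C i := (Equiv.sum_comp σ T).trans hs
  have hmaj (k : Fin n₁) : ∑ l ∈ Iic k, (T ∘ σ) l ≤ ∑ l ∈ Iic k, C l := by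
    refine sum_Iic_le_sum_Iic_of_le_or_ge hsσ k ?_
    by_cases hka : (k : ℕ) < a
    · refine Or.inl fun l hl => ?_
      rw [hC l, if_pos (lt_of_le_of_lt (Fin.le_def.1 hl) hka)]
      exact (hb (σ l)).2
    · refine Or.inr fun l hl => ?_
      have hal : a < (l : ℕ) := lt_of_le_of_lt (not_lt.1 hka) (Fin.lt_def.1 hl)
      rw [hC l, if_neg (by omega), if_neg (by omega)]
      exact (hb (σ l)).1
  simpa [Function.comp_def] using (of_sum_Iic_le hanti hmaj hsσ h).comp_perm σ.symm

end TripartiteGraphic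

theorem statement4_general {n₁ n₂ n₃ : ℕ} (a₁ a₂ a₃ : ℕ)
    (d₁max d₁min d₁ d₂max d₂min d₂ d₃max d₃min d₃ : ℕ)
    (D₁ : Fin n₁ → ℕ) (D₂ : Fin n₂ → ℕ) (D₃ : Fin n₃ → ℕ)
    (hD₁ : ∀ i : Fin n₁,
      D₁ i = if (i : ℕ) < a₁ then d₁max else if (i : ℕ) = a₁ then d₁ else d₁min)
    (hD₂ : ∀ i : Fin n₂,
      D₂ i = if (i : ℕ) < a₂ then d₂max else if (i : ℕ) = a₂ then d₂ else d₂min)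
    (hD₃ : ∀ i : Fin n₃,
      D₃ i = if (i : ℕ) < a₃ then d₃max else if (i : ℕ) = a₃ then d₃ else d₃min)
    (hgraphic : TripartiteGraphic D₁ D₂ D₃)
    (D₁' : Fin n₁ → ℕ) (D₂' : Fin n₂ → ℕ) (D₃' : Fin n₃ → ℕ)
    (hb₁ : ∀ i, d₁min ≤ D₁' i ∧ D₁' i ≤ d₁max)
    (hb₂ : ∀ i, d₂min ≤ D₂' i ∧ D₂' i ≤ d₂max)
    (hb₃ : ∀ i, d₃min ≤ D₃' i ∧ D₃' i ≤ d₃max)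
    (hs₁ : ∑ i, D₁' i = ∑ i, D₁ i)
    (hs₂ : ∑ i, D₂' i = ∑ i, D₂ i)
    (hs₃ : ∑ i, D₃' i = ∑ i, D₃ i) :
    TripartiteGraphic D₁' D₂' D₃' :=
  have h₁ : TripartiteGraphic D₁' D₂ D₃ := hgraphic.of_threshold hD₁ hb₁ hs₁
  have h₂ : TripartiteGraphic D₂' D₃ D₁' := h₁.rotate.of_threshold hD₂ hb₂ hs₂
  have h₃ : TripartiteGraphic D₃' D₁' D₂' := h₂.rotate.of_threshold hD₃ hb₃ hs₃
  h₃.rotate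

/-- Let `(D₁, D₂, D₃)` be a graphic tripartite 3-uniform hypergraph degree sequence on
`n₁ + n₂ + n₃` vertices where each `Dₖ = (dₖmax, …, dₖmax, dₖ, dₖmin, …, dₖmin)` (with `aₖ`
maximal entries, one entry `dₖ` with `dₖmin ≤ dₖ ≤ dₖmax`, and the rest minimal).
If `(D₁', D₂', D₃')` is a tripartite degree sequence on `n₁ + n₂ + n₃` vertices with all entries
of `Dₖ'` between `dₖmin` and `dₖmax` and the same class degree sums as `(D₁, D₂, D₃)`, then
`(D₁', D₂', D₃')` is also graphic. -/
theorem statement4 {n₁ n₂ n₃ : ℕ} (a₁ a₂ a₃ : ℕ)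
    (d₁max d₁min d₁ d₂max d₂min d₂ d₃max d₃min d₃ : ℕ)
    (ha₁ : a₁ < n₁) (ha₂ : a₂ < n₂) (ha₃ : a₃ < n₃)
    (hd₁ : d₁min ≤ d₁ ∧ d₁ ≤ d₁max) (hd₂ : d₂min ≤ d₂ ∧ d₂ ≤ d₂max)
    (hd₃ : d₃min ≤ d₃ ∧ d₃ ≤ d₃max)
    (D₁ : Fin n₁ → ℕ) (D₂ : Fin n₂ → ℕ) (D₃ : Fin n₃ → ℕ)
    (hD₁ : ∀ i : Fin n₁,
      D₁ i = if (i : ℕ) < a₁ then d₁max else if (i : ℕ) = a₁ then d₁ else d₁min)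
    (hD₂ : ∀ i : Fin n₂,
      D₂ i = if (i : ℕ) < a₂ then d₂max else if (i : ℕ) = a₂ then d₂ else d₂min)
    (hD₃ : ∀ i : Fin n₃,
      D₃ i = if (i : ℕ) < a₃ then d₃max else if (i : ℕ) = a₃ then d₃ else d₃min)
    (hgraphic : TripartiteGraphic D₁ D₂ D₃)
    (D₁' : Fin n₁ → ℕ) (D₂' : Fin n₂ → ℕ) (D₃' : Fin n₃ → ℕ)
    (hb₁ : ∀ i, d₁min ≤ D₁' i ∧ D₁' i ≤ d₁max)
    (hb₂ : ∀ i, d₂min ≤ D₂' i ∧ D₂' i ≤ d₂max)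
    (hb₃ : ∀ i, d₃min ≤ D₃' i ∧ D₃' i ≤ d₃max)
    (hs₁ : ∑ i, D₁' i = ∑ i, D₁ i)
    (hs₂ : ∑ i, D₂' i = ∑ i, D₂ i)
    (hs₃ : ∑ i, D₃' i = ∑ i, D₃ i) :
    TripartiteGraphic D₁' D₂' D₃' :=
  statement4_general a₁ a₂ a₃ d₁max d₁min d₁ d₂max d₂min d₂ d₃max d₃min d₃ D₁ D₂ D₃ hD₁ hD₂ hD₃
    hgraphic D₁' D₂' D₃' hb₁ hb₂ hb₃ hs₁ hs₂ hs₃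
end

section
/- Let D be a graphic 3-uniform hypergraph degree sequence on n vertices of the form (d_max, d_max, …, d_max, d, d_min, d_min, …, d_min) with d_min ≤ d ≤ d_max. Let D' be a 3-uniform hypergraph degree sequence on n vertices such that every entry of D' lies between d_min and d_max and the sum of the entries of D' equals the sum of the entries of D. Then D' is also a graphic 3-uniform hypergraph degree sequence. -/
/-!
Moving one unit of degree from a vertex `u` to a vertex `v` of strictly smaller degree preserves
graphicity: there are more hyperedges through `u` but not `v` than through `v` but not `u`, so
for some hyperedge `e ∋ u` avoiding `v` the exchanged triple `e - u + v` is not a hyperedge, and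
replacing `e` by it performs the move.

Relabel the vertices so that `D'` is non-increasing and place the entries of `D` in their given
order, giving a graphic `C`. A vertex where `C` exceeds `D'` cannot carry `dmin`, so it comes no
later than position `a`; a vertex where `C` falls short of `D'` cannot carry `dmax`, so it comes
no earlier. Hence every surplus vertex `u` and deficit vertex `v` satisfy `C v < D' v ≤ D' u < C u`,
which allows a move from `u` to `v`. This condition survives the move, which lowers the total
surplus by one, so repeated moves turn `C` into `D'`.
-/

open Finset

section Exchange

variable {α : Type*} [DecidableEq α]

lemma insert_erase_insert_erase {u v : α} {e : Finset α} (hu : u ∈ e) (hv : v ∉ e) :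
    insert u ((insert v (e.erase u)).erase v) = e := by
  rw [erase_insert fun h => hv (mem_of_mem_erase h), insert_erase hu]

lemma card_insert_erase_of_mem_of_notMem {u v : α} {e : Finset α} (hu : u ∈ e) (hv : v ∉ e) :
    #(insert v (e.erase u)) = #e := by
  rw [card_insert_of_notMem fun h => hv (mem_of_mem_erase h), card_erase_add_one hu]

lemma exists_mem_insert_erase_notMem {E : Finset (Finset α)} {u v : α}
    (h : #{e ∈ E | v ∈ e} < #{e ∈ E | u ∈ e}) :
    ∃ e ∈ E, u ∈ e ∧ v ∉ e ∧ insert v (e.erase u) ∉ E := by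
  have huv : u ≠ v := by rintro rfl; exact h.false
  by_contra! hall
  have hinj : #{e ∈ E | u ∈ e ∧ v ∉ e} ≤ #{e ∈ E | v ∈ e ∧ u ∉ e} := by
    refine card_le_card_of_injOn (fun e => insert v (e.erase u)) ?_ ?_
    · intro e he
      simp only [coe_filter, Set.mem_ofPred_eq] at he ⊢
      exact ⟨hall e he.1 he.2.1 he.2.2, mem_insert_self v _, by simp [huv]⟩
    · intro e₁ he₁ e₂ he₂ heq
      simp only [coe_filter, Set.mem_ofPred_eq] at he₁ he₂
      dsimp only at heq
      rw [← insert_erase_insert_erase he₁.2.1 he₁.2.2, ← insert_erase_insert_erase he₂.2.1 he₂.2.2,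
        heq]
  have hsplit (x y : α) :
      #{e ∈ E | x ∈ e ∧ y ∈ e} + #{e ∈ E | x ∈ e ∧ y ∉ e} = #{e ∈ E | x ∈ e} := by
    simpa only [filter_filter] using card_filter_add_card_filter_not (s := {e ∈ E | x ∈ e}) (y ∈ ·)
  have hcomm : #{e ∈ E | v ∈ e ∧ u ∈ e} = #{e ∈ E | u ∈ e ∧ v ∈ e} :=
    congrArg card (filter_congr fun _ _ => and_comm)
  have hu := hsplit u v
  have hv := hsplit v u
  omega

lemma card_filter_mem_insert_erase_add {E : Finset (Finset α)} {e e' : Finset α} (he : e ∈ E)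
    (he' : e' ∉ E) (w : α) :
    #{f ∈ insert e' (E.erase e) | w ∈ f} + (if w ∈ e then 1 else 0) =
      #{f ∈ E | w ∈ f} + (if w ∈ e' then 1 else 0) := by
  have he'' : e' ∉ {f ∈ E | w ∈ f}.erase e := fun h => he' (mem_filter.1 (mem_of_mem_erase h)).1
  have hcard : #({f ∈ E | w ∈ f}.erase e) + (if w ∈ e then 1 else 0) = #{f ∈ E | w ∈ f} := by
    split_ifs with hwe
    · exact card_erase_add_one (mem_filter.2 ⟨he, hwe⟩)
    · rw [erase_eq_of_notMem (a := e) fun h => hwe (mem_filter.1 h).2, add_zero]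
  rw [filter_insert, filter_erase, ← hcard]
  split_ifs <;> simp only [card_insert_of_notMem he'']

end Exchange

lemma sub_single_add_single_apply {ι : Type*} [DecidableEq ι] {C : ι → ℕ} {u v : ι}
    (huv : u ≠ v) (i : ι) :
    (C - Pi.single u 1 + Pi.single v 1 : ι → ℕ) i =
      if i = u then C u - 1 else if i = v then C v + 1 else C i := by
  rcases eq_or_ne i u with rfl | hiu
  · simp [huv]
  · rcases eq_or_ne i v with rfl | hiv <;> simp [*]

lemma sum_sub_single_add_single {ι : Type*} [Fintype ι] [DecidableEq ι] {C : ι → ℕ} {u : ι}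
    (hu : 1 ≤ C u) (v : ι) : ∑ i, (C - Pi.single u 1 + Pi.single v 1 : ι → ℕ) i = ∑ i, C i := by
  have hle : ∀ i ∈ univ, (Pi.single u 1 : ι → ℕ) i ≤ C i := by
    intro i _
    rcases eq_or_ne i u with rfl | hi <;> simp_all
  simp only [Pi.add_apply, Pi.sub_apply, sum_add_distrib, sum_tsub_distrib _ hle, sum_pi_single',
    mem_univ, if_true]
  have := single_le_sum (f := C) (fun _ _ => Nat.zero_le _) (mem_univ u)
  omega

namespace HypergraphGraphic

variable {n : ℕ}

lemma comp_perm {C : Fin n → ℕ} (hC : HypergraphGraphic C) (σ : Equiv.Perm (Fin n)) :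
    HypergraphGraphic (C ∘ σ) := by
  obtain ⟨E, hE, hdeg⟩ := hC
  refine ⟨E.map ⟨map σ.symm.toEmbedding, map_injective _⟩, ?_, fun w => ?_⟩
  · simp only [mem_map, Function.Embedding.coeFn_mk]
    rintro _ ⟨e, he, rfl⟩
    rw [card_map, hE e he]
  · rw [filter_map, card_map, Function.comp_apply, ← hdeg]
    simp [mem_map_equiv]

lemma sub_single_add_single {C : Fin n → ℕ} (hC : HypergraphGraphic C) {u v : Fin n}
    (h : C v < C u) : HypergraphGraphic (C - Pi.single u 1 + Pi.single v 1) := by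
  obtain ⟨E, hE, hdeg⟩ := hC
  obtain ⟨e, he, hu, hv, he'⟩ :=
    exists_mem_insert_erase_notMem (E := E) (u := u) (v := v) (by rwa [hdeg, hdeg])
  have huv : u ≠ v := by rintro rfl; exact hv hu
  refine ⟨insert (insert v (e.erase u)) (E.erase e), ?_, fun w => ?_⟩
  · simp only [mem_insert, mem_erase]
    rintro f (rfl | ⟨-, hf⟩)
    · rw [card_insert_erase_of_mem_of_notMem hu hv, hE e he]
    · exact hE f hf
  · have hw := card_filter_mem_insert_erase_add he he' w
    rw [hdeg] at hw
    rw [sub_single_add_single_apply huv]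
    rcases eq_or_ne w u with rfl | hwu
    · simp [hu, huv] at hw ⊢
      omega
    rcases eq_or_ne w v with rfl | hwv
    · simpa [hv, hwu] using hw
    simpa [hwu, hwv] using hw

theorem of_sum_eq_of_deficit_le_surplus {C D : Fin n → ℕ} (hC : HypergraphGraphic C)
    (hs : ∑ i, C i = ∑ i, D i)
    (hCD : ∀ u v, D u < C u → C v < D v → D v ≤ D u) : HypergraphGraphic D := by
  obtain ⟨k, hk⟩ : ∃ k, ∑ i, (C i - D i) = k := ⟨_, rfl⟩
  induction k generalizing C with
  | zero =>
    have hle : ∀ i ∈ univ, C i ≤ D i := by simpa [sum_eq_zero_iff, Nat.sub_eq_zero_iff_le] using hk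
    have hCeq : C = D := funext fun i => (sum_eq_sum_iff_of_le hle).1 hs i (mem_univ i)
    exact hCeq ▸ hC
  | succ k ih =>
    obtain ⟨u, -, hu⟩ := sum_pos_iff.1 (by omega : 0 < ∑ i, (C i - D i))
    obtain ⟨v, hv⟩ : ∃ v, C v < D v := by
      by_contra! hge
      have := (sum_eq_sum_iff_of_le fun i _ => hge i).1 hs.symm u (mem_univ u)
      omega
    have hDvu := hCD u v (by omega) hv
    have huv : u ≠ v := by rintro rfl; omega
    set C' := C - Pi.single u 1 + Pi.single v 1
    have hC' (i : Fin n) : C' i = if i = u then C u - 1 else if i = v then C v + 1 else C i :=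
      sub_single_add_single_apply huv i
    refine ih (C := C') (hC.sub_single_add_single (by omega)) ?_ ?_ ?_
    · exact (sum_sub_single_add_single (by omega) v).trans hs
    · intro x y hx hy
      rw [hC'] at hx hy
      refine hCD x y ?_ ?_
      · split_ifs at hx <;> subst_vars <;> omega
      · split_ifs at hy <;> subst_vars <;> omega
    · have hpt (i : Fin n) : (C' i - D i) + (Pi.single u 1 : Fin n → ℕ) i = C i - D i := by
        rw [hC', Pi.single_apply]
        split_ifs <;> subst_vars <;> omega
      have := sum_congr rfl fun i (_ : i ∈ univ) => hpt i
      simp only [sum_add_distrib, sum_pi_single', mem_univ, if_true] at this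
      omega

end HypergraphGraphic

lemma Fin.exists_perm_antitone_comp {n : ℕ} {β : Type*} [LinearOrder β] (f : Fin n → β) :
    ∃ σ : Equiv.Perm (Fin n), Antitone (f ∘ σ) :=
  ⟨Fin.revPerm.trans (Tuple.sort f), (Tuple.monotone_sort f).comp_antitone Fin.rev_anti⟩

theorem statement5_general {n : ℕ} (a dmax dmin d : ℕ)
    (D : Fin n → ℕ)
    (hD : ∀ i : Fin n,
      D i = if (i : ℕ) < a then dmax else if (i : ℕ) = a then d else dmin)
    (hgraphic : HypergraphGraphic D)
    (D' : Fin n → ℕ)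
    (hb : ∀ i, dmin ≤ D' i ∧ D' i ≤ dmax)
    (hs : ∑ i, D' i = ∑ i, D i) :
    HypergraphGraphic D' := by
  obtain ⟨τ, hτ⟩ := Fin.exists_perm_antitone_comp D'
  refine (hgraphic.comp_perm τ.symm).of_sum_eq_of_deficit_le_surplus
    (by rw [hs]; exact Equiv.sum_comp τ.symm D) ?_
  intro u v hu hv
  have hp : (τ.symm u : ℕ) ≤ a := by
    by_contra! hlt
    rw [Function.comp_apply, hD, if_neg (by omega), if_neg (by omega)] at hu
    exact hu.not_ge (hb u).1
  have hq : a ≤ (τ.symm v : ℕ) := by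
    by_contra! hlt
    rw [Function.comp_apply, hD, if_pos hlt] at hv
    exact hv.not_ge (hb v).2
  simpa using hτ (Fin.le_def.2 (hp.trans hq))

/-- Let `D = (dmax, …, dmax, d, dmin, …, dmin)` be a graphic 3-uniform hypergraph degree
sequence on `n` vertices (with `a` maximal entries, one entry `d` with `dmin ≤ d ≤ dmax`,
and the rest minimal). If `D'` is a degree sequence on `n` vertices with all entries between
`dmin` and `dmax` and the same degree sum as `D`, then `D'` is also graphic. -/
theorem statement5 {n : ℕ} (a dmax dmin d : ℕ) (ha : a < n)
    (hd : dmin ≤ d ∧ d ≤ dmax)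
    (D : Fin n → ℕ)
    (hD : ∀ i : Fin n,
      D i = if (i : ℕ) < a then dmax else if (i : ℕ) = a then d else dmin)
    (hgraphic : HypergraphGraphic D)
    (D' : Fin n → ℕ)
    (hb : ∀ i, dmin ≤ D' i ∧ D' i ≤ dmax)
    (hs : ∑ i, D' i = ∑ i, D i) :
    HypergraphGraphic D' :=
  statement5_general a dmax dmin d D hD hgraphic D' hb hs
end

section
/- Let D = (D₁, D₂) be a bipartite degree sequence such that D₁ is almost regular with degrees k₁ and k₁ + 1, and D₂ is almost regular with degrees k₂ and k₂ + 1. If the sum of the entries of D₁ equals the sum of the entries of D₂, k₁ + 1 ≤ |D₂| and k₂ + 1 ≤ |D₁|, then D has a simple bipartite graph realization. -/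
open Finset

theorem BipartiteGraphic.of_adj {n m : ℕ} {D₁ : Fin n → ℕ} {D₂ : Fin m → ℕ}
    (R : Fin n → Fin m → Prop) [DecidableRel R]
    (hrow : ∀ u, #{v | R u v} = D₁ u) (hcol : ∀ v, #{u | R u v} = D₂ v) :
    BipartiteGraphic D₁ D₂ := by
  refine ⟨univ.filter fun e : Fin n × Fin m => R e.1 e.2, fun u => ?_, fun v => ?_⟩
  · rw [← hrow u, filter_filter]
    refine card_nbij' Prod.snd (fun v => (u, v)) ?_ ?_ ?_ ?_ <;> intro e <;> aesop
  · rw [← hcol v, filter_filter]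
    refine card_nbij' Prod.fst (fun u => (u, v)) ?_ ?_ ?_ ?_ <;> intro e <;> aesop

theorem Equiv.Perm.exists_forall_iff_of_card_filter_eq {α : Type*} [Fintype α]
    (p q : α → Prop) [DecidablePred p] [DecidablePred q] (h : #{a | p a} = #{a | q a}) :
    ∃ σ : Equiv.Perm α, ∀ a, q (σ a) ↔ p a := by
  have hcard : Fintype.card {a // p a} = Fintype.card {a // q a} := by
    simpa only [Fintype.card_subtype] using h
  let e := Fintype.equivOfCardEq hcard
  let f : {a // ¬p a} ≃ {a // ¬q a} :=
    Fintype.equivOfCardEq (by rw [Fintype.card_subtype_compl, Fintype.card_subtype_compl, hcard])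
  refine ⟨Equiv.subtypeCongr e f, fun a => ?_⟩
  by_cases ha : p a
  · simpa [Equiv.subtypeCongr, Equiv.sumCompl_symm_apply_of_pos ha, ha] using (e ⟨a, ha⟩).2
  · simpa [Equiv.subtypeCongr, Equiv.sumCompl_symm_apply_of_neg ha, ha] using (f ⟨a, ha⟩).2

theorem Nat.count_mod_eq_mul_add {m k t w : ℕ} (ht : t ≤ m) (hw : w < m) :
    (m * k + t).count (· % m = w) = k + if w < t then 1 else 0 := by
  have hm : 0 < m := by omega
  have hcount := Nat.count_modEq_card (m * k + t) hm w
  simp only [Nat.ModEq, Nat.mod_eq_of_lt hw] at hcount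
  rw [hcount]
  rcases ht.lt_or_eq with ht | rfl
  · rw [Nat.mul_add_div hm, Nat.div_eq_of_lt ht, Nat.mul_add_mod, Nat.mod_eq_of_lt ht, add_zero]
  · rw [← mul_add_one, Nat.mul_div_cancel_left _ hm, Nat.mul_mod_right]
    simp [hw]

theorem Nat.count_sum_range (p : ℕ → Prop) [DecidablePred p] (d : ℕ → ℕ) (n : ℕ) :
    (∑ i ∈ range n, d i).count p =
      ∑ i ∈ range n, (d i).count fun j => p (∑ l ∈ range i, d l + j) := by
  induction n with
  | zero => simp
  | succ n ih => rw [sum_range_succ, Nat.count_add, ih, sum_range_succ]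

theorem Nat.injOn_add_mod (m c : ℕ) : Set.InjOn (fun j => (c + j) % m) (Set.Iio m) :=
  fun j₁ hj₁ j₂ hj₂ h => by
    have := Nat.ModEq.add_left_cancel' c h
    rwa [Nat.ModEq, Nat.mod_eq_of_lt hj₁, Nat.mod_eq_of_lt hj₂] at this

theorem Nat.count_add_mod_eq_ite {m l : ℕ} (hl : l ≤ m) (c w : ℕ) :
    l.count (fun j => (c + j) % m = w) = if ∃ j < l, (c + j) % m = w then 1 else 0 := by
  split_ifs with h
  · have hpos := Nat.count_ne_iff_exists.mpr h
    have hle : l.count (fun j => (c + j) % m = w) ≤ 1 := by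
      rw [Nat.count_eq_card_filter_range, card_le_one]
      intro a ha b hb
      simp only [mem_filter, mem_range] at ha hb
      exact Nat.injOn_add_mod m c (Set.mem_Iio.mpr (by omega)) (Set.mem_Iio.mpr (by omega))
        (ha.2.trans hb.2.symm)
    omega
  · exact Nat.count_iff_forall_not.mpr (by simpa using h)

section CyclicFilling

variable (m : ℕ) (d : ℕ → ℕ)

def cyclicAdj (i w : ℕ) : Prop :=
  ∃ j < d i, (∑ l ∈ range i, d l + j) % m = w

instance (i w : ℕ) : Decidable (cyclicAdj m d i w) := by
  unfold cyclicAdj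
  infer_instance

variable {m d}

theorem card_cyclicAdj_row {i : ℕ} (hi : d i ≤ m) : #{w : Fin m | cyclicAdj m d i w} = d i := by
  rw [← card_range (d i)]
  symm
  refine card_bij (fun j hj => ⟨(∑ l ∈ range i, d l + j) % m, Nat.mod_lt _ ?_⟩) ?_ ?_ ?_
  · simp only [mem_range] at hj
    omega
  · intro j hj
    simp only [mem_filter, mem_univ, true_and]
    exact ⟨j, mem_range.mp hj, rfl⟩
  · intro j₁ hj₁ j₂ hj₂ h
    simp only [mem_range] at hj₁ hj₂
    exact Nat.injOn_add_mod m _ (Set.mem_Iio.mpr (by omega)) (Set.mem_Iio.mpr (by omega))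
      (Fin.mk.inj h)
  · intro w hw
    obtain ⟨j, hj, hjw⟩ := (mem_filter.mp hw).2
    exact ⟨j, mem_range.mpr hj, Fin.ext hjw⟩

theorem card_cyclicAdj_col {n : ℕ} (hd : ∀ i < n, d i ≤ m) (w : ℕ) :
    #{i : Fin n | cyclicAdj m d i w} = (∑ i ∈ range n, d i).count (· % m = w) := by
  rw [Nat.count_sum_range, card_filter, ← Fin.sum_univ_eq_sum_range]
  refine sum_congr rfl fun i _ => ?_
  rw [Nat.count_add_mod_eq_ite (hd i i.isLt)]
  rfl

end CyclicFilling

theorem bipartiteGraphic_of_le_of_almostRegular {n m : ℕ} (k : ℕ) (D₁ : Fin n → ℕ)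
    (D₂ : Fin m → ℕ) (hD₁ : ∀ i, D₁ i ≤ m) (hD₂ : ∀ j, D₂ j = k ∨ D₂ j = k + 1)
    (hsum : ∑ i, D₁ i = ∑ j, D₂ j) :
    BipartiteGraphic D₁ D₂ := by
  have hD₂sum : ∑ j, D₂ j = m * k + #{v | D₂ v = k + 1} := by
    have hsplit : ∀ j, D₂ j = k + if D₂ j = k + 1 then 1 else 0 := fun j => by
      rcases hD₂ j with h | h <;> simp [h]
    rw [card_filter, sum_congr rfl fun j _ => hsplit j, sum_add_distrib, sum_const, card_univ,
      Fintype.card_fin, smul_eq_mul]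
  set t := #{v | D₂ v = k + 1}
  have ht : t ≤ m := (card_filter_le _ _).trans_eq (card_fin m)
  obtain ⟨σ, hσ⟩ := Equiv.Perm.exists_forall_iff_of_card_filter_eq
    (fun v => D₂ v = k + 1) (fun w : Fin m => (w : ℕ) < t)
    (by rw [Fin.card_filter_val_lt, min_eq_right ht])
  let d : ℕ → ℕ := fun i => if h : i < n then D₁ ⟨i, h⟩ else 0
  have hd : ∀ i : Fin n, d i = D₁ i := fun i => dif_pos i.isLt
  have hdsum : ∑ i ∈ range n, d i = m * k + t := by
    rw [← Fin.sum_univ_eq_sum_range, ← hD₂sum, ← hsum]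
    exact sum_congr rfl fun i _ => hd i
  refine BipartiteGraphic.of_adj (fun u v => cyclicAdj m d u (σ v)) (fun u => ?_) (fun v => ?_)
  · rw [card_equiv σ (t := {w : Fin m | cyclicAdj m d u w}) (by simp),
      card_cyclicAdj_row ((hd u).trans_le (hD₁ u)), hd]
  · rw [card_cyclicAdj_col (fun i hi => (hd ⟨i, hi⟩).trans_le (hD₁ _)), hdsum,
      Nat.count_mod_eq_mul_add ht (σ v).isLt]
    have hv := hσ v
    rcases hD₂ v with h | h <;> simp [h] at hv ⊢ <;> omega

theorem statement6_general {n m : ℕ} (k₁ k₂ : ℕ) (D₁ : Fin n → ℕ) (D₂ : Fin m → ℕ)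
    (h₁ : ∀ i, D₁ i = k₁ ∨ D₁ i = k₁ + 1)
    (h₂ : ∀ j, D₂ j = k₂ ∨ D₂ j = k₂ + 1)
    (hsum : ∑ i, D₁ i = ∑ j, D₂ j)
    (hk₁ : k₁ + 1 ≤ m) :
    BipartiteGraphic D₁ D₂ :=
  bipartiteGraphic_of_le_of_almostRegular k₂ D₁ D₂ (fun i => by rcases h₁ i with h | h <;> omega)
    h₂ hsum

/-- If `D₁` is almost regular with degrees `k₁` and `k₁ + 1`, `D₂` is almost regular with
degrees `k₂` and `k₂ + 1`, the degree sums of `D₁` and `D₂` are equal, `k₁ + 1 ≤ |D₂|` and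
`k₂ + 1 ≤ |D₁|`, then `(D₁, D₂)` has a simple bipartite graph realization. -/
theorem statement6 {n m : ℕ} (k₁ k₂ : ℕ) (D₁ : Fin n → ℕ) (D₂ : Fin m → ℕ)
    (h₁ : ∀ i, D₁ i = k₁ ∨ D₁ i = k₁ + 1)
    (h₂ : ∀ j, D₂ j = k₂ ∨ D₂ j = k₂ + 1)
    (hsum : ∑ i, D₁ i = ∑ j, D₂ j)
    (hk₁ : k₁ + 1 ≤ m) (hk₂ : k₂ + 1 ≤ n) :
    BipartiteGraphic D₁ D₂ :=
  statement6_general k₁ k₂ D₁ D₂ h₁ h₂ hsum hk₁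
end

section
/- Let D₁ be an almost regular degree sequence on n vertices with all entries equal to k or k + 1. If k + 1 ≤ n², then the tripartite degree sequence D = (D₁, D₁, D₁) has a tripartite 3-uniform hypergraph realization H = (A, B, C, E). -/
open Finset

namespace Tripartite

variable {G : Type*} [AddGroup G] [Fintype G] [DecidableEq G]

/-- `(i, a, b) ↦ (i, i + a, i + b)`. -/
def shiftEquiv : G × G × G ≃ G × G × G :=
  (Equiv.refl G).prodShear fun i => (Equiv.addLeft i).prodCongr (Equiv.addLeft i)

/-- Hyperedges in the coordinates of `shiftEquiv`: every vertex with every shift in `S`, and the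
vertices of `T` with the zero shift. -/
def shiftPattern (S : Finset (G × G)) (T : Finset G) : Finset (G × G × G) :=
  univ ×ˢ S ∪ T ×ˢ {0}

theorem card_filter_univ_product_add_eq (S : Finset (G × G)) (f : G × G → G) (y : G) :
    #((univ ×ˢ S).filter fun p => p.1 + f p.2 = y) = #S :=
  card_nbij' Prod.snd (fun s => (y - f s, s))
    (by intro p hp; simp_all)
    (by intro s hs; simp_all)
    (by rintro ⟨i, s⟩ hp; simp at hp; simp [← hp.2])
    (by intro s _; rfl)

theorem card_filter_shiftPattern {S : Finset (G × G)} (hS : (0 : G × G) ∉ S) (T : Finset G)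
    (f : G × G →+ G) (y : G) :
    #((shiftPattern S T).filter fun p => p.1 + f p.2 = y) = #S + if y ∈ T then 1 else 0 := by
  have hdisj : Disjoint (univ ×ˢ S) (T ×ˢ ({0} : Finset (G × G))) :=
    disjoint_product.mpr (Or.inr (disjoint_singleton_right.mpr hS))
  rw [shiftPattern, filter_union, card_union_of_disjoint (disjoint_filter_filter hdisj),
    card_filter_univ_product_add_eq]
  congr 1
  have hdiag :
      (T ×ˢ {(0 : G × G)}).filter (fun p => p.1 + f p.2 = y) = T.filter (· = y) ×ˢ {0} := by
    ext ⟨i, s⟩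
    simp only [mem_filter, mem_product, mem_singleton]
    grind
  rw [hdiag, card_product, card_singleton, mul_one, filter_eq', apply_ite card, card_singleton,
    card_empty]

end Tripartite

open Tripartite in
theorem tripartiteGraphic_of_shifts {n : ℕ} [NeZero n] {S : Finset (Fin n × Fin n)}
    (hS : (0 : Fin n × Fin n) ∉ S) (T : Finset (Fin n)) :
    TripartiteGraphic (fun i => #S + if i ∈ T then 1 else 0)
      (fun i => #S + if i ∈ T then 1 else 0) (fun i => #S + if i ∈ T then 1 else 0) := by
  refine ⟨(shiftPattern S T).map shiftEquiv.toEmbedding, ?_, ?_, ?_⟩ <;> intro y <;>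
    rw [filter_map, card_map]
  · convert card_filter_shiftPattern hS T 0 y using 3
    simp [shiftEquiv]
  · convert card_filter_shiftPattern hS T (AddMonoidHom.fst _ _) y using 3
    simp [shiftEquiv]
  · convert card_filter_shiftPattern hS T (AddMonoidHom.snd _ _) y using 3
    simp [shiftEquiv]

/-- Let `D₁` be an almost regular degree sequence on `n` vertices with all entries equal to
`k` or `k + 1`. If `k + 1 ≤ n²`, then the tripartite degree sequence `(D₁, D₁, D₁)` has a
tripartite 3-uniform hypergraph realization. -/
theorem statement9 {n : ℕ} (k : ℕ) (D₁ : Fin n → ℕ)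
    (h : ∀ i, D₁ i = k ∨ D₁ i = k + 1) (hk : k + 1 ≤ n ^ 2) :
    TripartiteGraphic D₁ D₁ D₁ := by
  have : NeZero n := ⟨by rintro rfl; simp at hk⟩
  obtain ⟨S, hS, hSk⟩ : ∃ S ⊆ univ.erase (0 : Fin n × Fin n), #S = k := by
    refine exists_subset_card_eq ?_
    rw [card_erase_of_mem (mem_univ _), card_univ, Fintype.card_prod, Fintype.card_fin, ← sq]
    omega
  have hD : D₁ = fun i => #S + if i ∈ univ.filter (D₁ · = k + 1) then 1 else 0 := by
    ext i
    rcases h i with hi | hi <;> simp [hi, hSk]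
  rw [hD]
  exact tripartiteGraphic_of_shifts (fun h0 => by simpa using hS h0) _
end

section
/- Any bipartite degree sequence (D₁, D₂) on n + n vertices, with the sum of the entries of D₁ equal to the sum of the entries of D₂, and each entry at least n/4 and at most 3n/4, is graphic. -/
open Finset


lemma arith_key (n a b : ℤ) (hb : 0 ≤ b) (hba : b ≤ a) (han : a ≤ n) :
    n * a + 3 * (n * b) ≤ 4 * (a * b) + n * n := by
  rcases le_or_gt (4 * b) n with h | h
  · nlinarith [mul_nonneg (sub_nonneg.2 han) (sub_nonneg.2 h),
      mul_nonneg (hb.trans (hba.trans han)) hb]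
  · nlinarith [sq_nonneg (2 * b - n),
      mul_nonneg (sub_nonneg.2 hba) (by linarith : (0:ℤ) ≤ 4 * b - n)]

lemma exists_top {α : Type*} [DecidableEq α] (s : Finset α) (f : α → ℕ) :
    ∀ d, d ≤ s.card → ∃ T ⊆ s, T.card = d ∧
      ∀ j ∈ T, ∀ j' ∈ s, j' ∉ T → f j' ≤ f j := by
  intro d
  induction d with
  | zero => exact fun _ => ⟨∅, empty_subset _, card_empty, by simp⟩
  | succ d ih =>
    intro hd
    obtain ⟨T, hTs, hTcard, hTtop⟩ := ih (Nat.le_of_succ_le hd)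
    have hne : (s \ T).Nonempty := by
      rw [← card_pos, card_sdiff_of_subset hTs]
      omega
    obtain ⟨j₀, hj₀, hj₀max⟩ := Finset.exists_max_image (s \ T) f hne
    rw [mem_sdiff] at hj₀
    refine ⟨insert j₀ T, insert_subset hj₀.1 hTs, by rw [card_insert_of_notMem hj₀.2, hTcard], ?_⟩
    intro j hj j' hj's hj'
    rcases mem_insert.1 hj with rfl | hjT
    · exact hj₀max j' (mem_sdiff.2 ⟨hj's, fun h => hj' (mem_insert_of_mem h)⟩)
    · exact hTtop j hjT j' hj's (fun h => hj' (mem_insert_of_mem h))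

lemma arith_key_nat (n a b : ℕ) (hba : b ≤ a) (han : a ≤ n) :
    n * a + 3 * (n * b) ≤ 4 * (a * b) + n * n := by
  have := arith_key (n : ℤ) a b (by positivity) (by exact_mod_cast hba) (by exact_mod_cast han)
  exact_mod_cast this

lemma gr_cond {n : ℕ} (D₁ D₂ : Fin n → ℕ)
    (hsum : ∑ i, D₁ i = ∑ j, D₂ j)
    (hb₁ : ∀ i, n ≤ 4 * D₁ i ∧ 4 * D₁ i ≤ 3 * n)
    (hb₂ : ∀ j, n ≤ 4 * D₂ j ∧ 4 * D₂ j ≤ 3 * n) :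
    ∀ A : Finset (Fin n), ∀ B : Finset (Fin n),
       ∑ i ∈ A, D₁ i ≤ A.card * B.card + ∑ j ∈ Bᶜ, D₂ j := by
  intro A B
  have hca : A.card + Aᶜ.card = n := by
    rw [Finset.card_add_card_compl, Fintype.card_fin]
  have hcb : B.card + Bᶜ.card = n := by
    rw [Finset.card_add_card_compl, Fintype.card_fin]
  set a := A.card
  set b := B.card
  have han : a ≤ n := by omega
  have hbn : b ≤ n := by omega
  have hSA : ∑ i ∈ A, D₁ i + ∑ i ∈ Aᶜ, D₁ i = ∑ j, D₂ j := by
    rw [Finset.sum_add_sum_compl, hsum]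
  have hSB : ∑ j ∈ B, D₂ j + ∑ j ∈ Bᶜ, D₂ j = ∑ j, D₂ j :=
    Finset.sum_add_sum_compl _ _
  have hA1 : 4 * ∑ i ∈ A, D₁ i ≤ 3 * n * a := by
    rw [Finset.mul_sum]
    calc ∑ i ∈ A, 4 * D₁ i ≤ A.card * (3 * n) :=
          Finset.sum_le_card_nsmul A _ _ (fun i _ => (hb₁ i).2)
      _ = 3 * n * a := by ring
  have hAc : n * Aᶜ.card ≤ 4 * ∑ i ∈ Aᶜ, D₁ i := by
    rw [Finset.mul_sum]
    calc n * Aᶜ.card = Aᶜ.card * n := by ring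
      _ ≤ ∑ i ∈ Aᶜ, 4 * D₁ i := Finset.card_nsmul_le_sum Aᶜ _ _ (fun i _ => (hb₁ i).1)
  have hB1 : 4 * ∑ j ∈ B, D₂ j ≤ 3 * n * b := by
    rw [Finset.mul_sum]
    calc ∑ j ∈ B, 4 * D₂ j ≤ B.card * (3 * n) :=
          Finset.sum_le_card_nsmul B _ _ (fun j _ => (hb₂ j).2)
      _ = 3 * n * b := by ring
  have hBc : n * Bᶜ.card ≤ 4 * ∑ j ∈ Bᶜ, D₂ j := by
    rw [Finset.mul_sum]
    calc n * Bᶜ.card = Bᶜ.card * n := by ring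
      _ ≤ ∑ j ∈ Bᶜ, 4 * D₂ j := Finset.card_nsmul_le_sum Bᶜ _ _ (fun j _ => (hb₂ j).1)
  have hnca : n * a + n * Aᶜ.card = n * n := by rw [← Nat.mul_add, hca]
  have hncb : n * b + n * Bᶜ.card = n * n := by rw [← Nat.mul_add, hcb]
  rcases le_total b a with hba | hab
  · have key := arith_key_nat n a b hba han
    -- 4 S₁ ≤ 4S - n * caᶜ ; 4 S₂c ≥ 4S - 3nb
    nlinarith [hSA, hSB, hA1, hAc, hB1, hBc, hnca, hncb, key]
  · have key := arith_key_nat n b a hab hbn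
    have hmul : 4 * (b * a) = 4 * (a * b) := by ring
    nlinarith [hA1, hBc, hncb, key, hmul]

lemma gr_realizable {n : ℕ} (D₁ : Fin n → ℕ) :
    ∀ R : Finset (Fin n), ∀ D₂ : Fin n → ℕ,
    (∑ i ∈ R, D₁ i = ∑ j, D₂ j) →
    (∀ A ⊆ R, ∀ B : Finset (Fin n),
       ∑ i ∈ A, D₁ i ≤ A.card * B.card + ∑ j ∈ Bᶜ, D₂ j) →
    ∃ E : Finset (Fin n × Fin n),
      (∀ e ∈ E, e.1 ∈ R) ∧
      (∀ u ∈ R, (E.filter fun e => e.1 = u).card = D₁ u) ∧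
      (∀ v, (E.filter fun e => e.2 = v).card = D₂ v) := by
  intro R
  induction R using Finset.strongInduction with
  | _ R ih =>
  intro D₂ hsum hGR
  rcases R.eq_empty_or_nonempty with rfl | ⟨u, hu⟩
  · have h0 : ∀ j, D₂ j = 0 := by
      have : ∑ j, D₂ j = 0 := by simpa using hsum.symm
      intro j
      exact (Finset.sum_eq_zero_iff.1 this) j (mem_univ j)
    exact ⟨∅, by simp, by simp, fun v => by simp [h0 v]⟩
  · set d := D₁ u with hd
    set P : Finset (Fin n) := univ.filter (fun j => 0 < D₂ j) with hP
    -- d ≤ P.card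
    have hPc : ∀ j ∈ Pᶜ, D₂ j = 0 := by
      intro j hj
      simp only [hP, mem_compl, mem_filter, mem_univ, true_and, not_lt] at hj
      omega
    have hdP : d ≤ P.card := by
      have h := hGR {u} (singleton_subset_iff.2 hu) P
      rw [sum_singleton, card_singleton, one_mul, Finset.sum_eq_zero hPc] at h
      simpa using h
    obtain ⟨T, hTP, hTcard, hTtop⟩ := exists_top P D₂ d hdP
    have hT1 : ∀ j ∈ T, 1 ≤ D₂ j := by
      intro j hj
      have := hTP hj
      simp only [hP, mem_filter] at this
      omega
    have hTtop' : ∀ j ∈ T, ∀ j', j' ∉ T → D₂ j' ≤ D₂ j := by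
      intro j hj j' hj'
      by_cases h' : j' ∈ P
      · exact hTtop j hj j' h' hj'
      · have : D₂ j' = 0 := by
          simp only [hP, mem_filter, mem_univ, true_and, not_lt] at h'
          omega
        omega
    set D₂' : Fin n → ℕ := fun j => if j ∈ T then D₂ j - 1 else D₂ j with hD₂'
    have hptwise : ∀ j, D₂' j + (if j ∈ T then 1 else 0) = D₂ j := by
      intro j
      by_cases h : j ∈ T
      · simp only [hD₂', if_pos h]
        exact Nat.sub_add_cancel (hT1 j h)
      · simp [hD₂', h]
    have hcount : ∀ B' : Finset (Fin n),
        ∑ j ∈ B', D₂' j + (B' ∩ T).card = ∑ j ∈ B', D₂ j := by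
      intro B'
      have : ∑ j ∈ B', (if j ∈ T then 1 else 0) = (B' ∩ T).card := by
        rw [sum_ite_mem, sum_const, smul_eq_mul, mul_one]
      rw [← this, ← sum_add_distrib]
      exact Finset.sum_congr rfl fun j _ => hptwise j
    -- sums
    have hsum' : ∑ i ∈ R.erase u, D₁ i = ∑ j, D₂' j := by
      have h1 : ∑ i ∈ R.erase u, D₁ i + d = ∑ i ∈ R, D₁ i := Finset.sum_erase_add R D₁ hu
      have h2 := hcount univ
      rw [univ_inter, hTcard] at h2
      omega
    -- GR preserved
    have hGR' : ∀ A ⊆ R.erase u, ∀ B : Finset (Fin n),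
        ∑ i ∈ A, D₁ i ≤ A.card * B.card + ∑ j ∈ Bᶜ, D₂' j := by
      intro A hA B
      have hAR : A ⊆ R := hA.trans (erase_subset u R)
      have huA : u ∉ A := fun h => (mem_erase.1 (hA h)).1 rfl
      have hkey := hcount Bᶜ
      set k := (Bᶜ ∩ T).card with hk
      by_cases hbig : ∀ j ∈ Bᶜ ∩ T, A.card + 1 ≤ D₂ j
      · -- route (i)
        set K := Bᶜ ∩ T with hK
        have hKB : Disjoint B K := by
          rw [hK]
          exact disjoint_left.2 fun x hx hxB => (mem_compl.1 (mem_inter.1 hxB).1) hx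
        have h := hGR A hAR (B ∪ K)
        have hcardU : (B ∪ K).card = B.card + k := by
          rw [card_union_of_disjoint hKB]
        have hcomplU : (B ∪ K)ᶜ = Bᶜ \ K := by
          ext x
          simp only [compl_union, mem_inter, mem_compl, mem_sdiff, hK, mem_inter]
        have hsd : ∑ j ∈ Bᶜ \ K, D₂ j + ∑ j ∈ K, D₂ j = ∑ j ∈ Bᶜ, D₂ j :=
          Finset.sum_sdiff (by rw [hK]; exact inter_subset_left)
        have hKsum : k * (A.card + 1) ≤ ∑ j ∈ K, D₂ j := by
          have := Finset.card_nsmul_le_sum K D₂ (A.card + 1) (fun j hj => hbig j hj)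
          simpa [hK, mul_comm] using this
        rw [hcardU, hcomplU, Nat.mul_add] at h
        have e : k * (A.card + 1) = A.card * k + k := by ring
        linarith [h, hsd, hKsum, hkey, e]
      · -- route (ii)
        push_neg at hbig
        obtain ⟨j₀, hj₀, hj₀small⟩ := hbig
        have hsmall : ∀ j', j' ∉ T → D₂ j' ≤ A.card := by
          intro j' hj'
          have := hTtop' j₀ (mem_inter.1 hj₀).2 j' hj'
          omega
        have h := hGR (insert u A) (by rw [insert_subset_iff]; exact ⟨hu, hAR⟩) (B ∩ T)
        rw [sum_insert huA, card_insert_of_notMem huA] at h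
        -- decompose (B ∩ T)ᶜ sums
        have hsplitB : ∑ j ∈ B.filter (· ∈ T), D₂ j + ∑ j ∈ B.filter (· ∉ T), D₂ j
            = ∑ j ∈ B, D₂ j := Finset.sum_filter_add_sum_filter_not B _ D₂
        have hsplitBc : (B.filter (· ∈ T)).card + (B.filter (· ∉ T)).card = B.card :=
          Finset.card_filter_add_card_filter_not _
        set t' := (B.filter (· ∈ T)).card with ht'
        set m := (B.filter (· ∉ T)).card with hm
        have hBT : B ∩ T = B.filter (· ∈ T) := by
          rw [filter_mem_eq_inter]
        have hcompl1 : ∑ j ∈ (B ∩ T), D₂ j + ∑ j ∈ (B ∩ T)ᶜ, D₂ j = ∑ j, D₂ j :=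
          Finset.sum_add_sum_compl _ _
        have hcompl2 : ∑ j ∈ B, D₂ j + ∑ j ∈ Bᶜ, D₂ j = ∑ j, D₂ j :=
          Finset.sum_add_sum_compl _ _
        have hmbound : ∑ j ∈ B.filter (· ∉ T), D₂ j ≤ m * A.card := by
          have := Finset.sum_le_card_nsmul (B.filter (· ∉ T)) D₂ A.card
            (fun j hj => hsmall j (mem_filter.1 hj).2)
          simpa [hm, mul_comm] using this
        have htk : t' + k = d := by
          have h1 : (T.filter (· ∈ B)).card + (T.filter (· ∉ B)).card = T.card :=
            Finset.card_filter_add_card_filter_not _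
          have e1 : T.filter (· ∈ B) = B ∩ T := by
            ext x; simp [mem_inter, mem_filter, and_comm]
          have e2 : T.filter (· ∉ B) = Bᶜ ∩ T := by
            ext x; simp [mem_inter, mem_filter, and_comm]
          rw [e1, e2, hBT] at h1
          omega
        have hcard' : (B ∩ T).card = t' := by rw [hBT]
        rw [hcard'] at h
        rw [hBT] at h hcompl1
        have e3 : (A.card + 1) * t' = A.card * t' + t' := by ring
        have e4 : A.card * B.card = A.card * t' + A.card * m := by
          rw [← hsplitBc, Nat.mul_add]
        have e5 : m * A.card = A.card * m := Nat.mul_comm _ _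
        linarith [h, e3, e4, e5, hcompl1, hcompl2, hsplitB, hmbound, htk, hsplitBc, hkey, hd]
    obtain ⟨E', hE'R, hE'row, hE'col⟩ := ih (R.erase u) (Finset.erase_ssubset hu) D₂' hsum' hGR'
    have hdisj : Disjoint (T.image fun j => (u, j)) E' := by
      rw [disjoint_left]
      rintro e he heE'
      obtain ⟨j, hj, rfl⟩ := mem_image.1 he
      exact (mem_erase.1 (hE'R _ heE')).1 rfl
    have hcardimg : (T.image fun j => (u, j)).card = d := by
      rw [Finset.card_image_of_injective _ (fun a b h => by simpa using h), hTcard]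
    refine ⟨(T.image fun j => (u, j)) ∪ E', ?_, ?_, ?_⟩
    · intro e he
      rcases mem_union.1 he with h | h
      · obtain ⟨j, hj, rfl⟩ := mem_image.1 h
        exact hu
      · exact (erase_subset u R) (hE'R e h)
    · intro i hi
      rw [filter_union, card_union_of_disjoint (disjoint_filter_filter hdisj)]
      by_cases hiu : i = u
      · subst hiu
        have h1 : (E'.filter fun e => e.1 = i) = ∅ := by
          apply filter_eq_empty_iff.2
          intro e he h
          exact (mem_erase.1 (hE'R e he)).1 (by rw [← h])
        have himgrow : ((T.image fun j => (i, j)).filter fun e => e.1 = i)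
            = T.image fun j => (i, j) := by
          apply filter_eq_self.2
          intro e he
          obtain ⟨j, hj, rfl⟩ := mem_image.1 he
          rfl
        rw [h1, card_empty, himgrow, add_zero, hcardimg]
      · have h2 : ((T.image fun j => (u, j)).filter fun e => e.1 = i) = ∅ := by
          apply filter_eq_empty_iff.2
          intro e he
          obtain ⟨j, hj, rfl⟩ := mem_image.1 he
          exact fun h => hiu (by rw [← h])
        rw [h2, card_empty, zero_add]
        exact hE'row i (mem_erase.2 ⟨hiu, hi⟩)
    · intro v
      rw [filter_union, card_union_of_disjoint (disjoint_filter_filter hdisj)]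
      have hcardv : ((T.image fun j => (u, j)).filter fun e => e.2 = v).card
          = if v ∈ T then 1 else 0 := by
        by_cases hv : v ∈ T
        · rw [if_pos hv]
          have heq : ((T.image fun j => (u, j)).filter fun e => e.2 = v) = {(u, v)} := by
            ext e
            simp only [mem_filter, mem_image, mem_singleton]
            constructor
            · rintro ⟨⟨j, hj, rfl⟩, h2⟩
              simp only at h2
              rw [h2]
            · rintro rfl
              exact ⟨⟨v, hv, rfl⟩, rfl⟩
          rw [heq, card_singleton]
        · rw [if_neg hv, Finset.card_eq_zero]
          apply filter_eq_empty_iff.2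
          intro e he
          obtain ⟨j, hj, rfl⟩ := mem_image.1 he
          intro h
          simp only at h
          exact hv (h ▸ hj)
      rw [hcardv, hE'col v]
      have := hptwise v
      omega

/-- Any bipartite degree sequence on `n + n` vertices with equal degree sums on the two vertex
classes and each degree `d` satisfying `n/4 ≤ d ≤ 3n/4` (i.e. `n ≤ 4d` and `4d ≤ 3n`)
is graphic. -/
theorem statement11 {n : ℕ} (D₁ D₂ : Fin n → ℕ)
    (hsum : ∑ i, D₁ i = ∑ j, D₂ j)
    (hb₁ : ∀ i, n ≤ 4 * D₁ i ∧ 4 * D₁ i ≤ 3 * n)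
    (hb₂ : ∀ j, n ≤ 4 * D₂ j ∧ 4 * D₂ j ≤ 3 * n) :
    BipartiteGraphic D₁ D₂ := by
  obtain ⟨E, hE1, hErow, hEcol⟩ := gr_realizable D₁ univ D₂ hsum
    (fun A _ B => gr_cond D₁ D₂ hsum hb₁ hb₂ A B)
  exact ⟨E, fun u => hErow u (mem_univ u), hEcol⟩
end

section
/- The tripartite 3-uniform hypergraph degree sequence D = (D₁, D₁, D₁) on 6 + 6 + 6 vertices with D₁ = (9, 9, 27, 27, 27, 27) is not graphic; that is, there is no tripartite 3-uniform hypergraph on three vertex classes of size 6 each whose degrees in each class are exactly 9, 9, 27, 27, 27, 27. -/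
/-- The tripartite 3-uniform hypergraph degree sequence `(D₁, D₁, D₁)` on `6 + 6 + 6` vertices
with `D₁ = (9, 9, 27, 27, 27, 27)` is not graphic. -/
theorem statement19 :
    ¬ TripartiteGraphic (![9, 9, 27, 27, 27, 27] : Fin 6 → ℕ)
      (![9, 9, 27, 27, 27, 27] : Fin 6 → ℕ) (![9, 9, 27, 27, 27, 27] : Fin 6 → ℕ) := by
  rintro ⟨E, h1, h2, h3⟩
  -- total number of edges is 126
  have hcard : E.card = 126 := by
    have := Finset.card_eq_sum_card_fiberwise
      (f := fun e : Fin 6 × Fin 6 × Fin 6 => e.1) (s := E) (t := Finset.univ)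
      (fun x _ => Finset.mem_univ _)
    rw [this]
    simp only [Fin.sum_univ_six, h1]
    decide
  -- the "good" edges avoid vertices 0 and 1 in every class
  have hsplit : (E.filter fun e => e.1 ≠ 0 ∧ e.1 ≠ 1 ∧ e.2.1 ≠ 0 ∧ e.2.1 ≠ 1 ∧
      e.2.2 ≠ 0 ∧ e.2.2 ≠ 1).card + (E.filter fun e => ¬ (e.1 ≠ 0 ∧ e.1 ≠ 1 ∧ e.2.1 ≠ 0 ∧
      e.2.1 ≠ 1 ∧ e.2.2 ≠ 0 ∧ e.2.2 ≠ 1)).card = E.card := by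
    convert Finset.card_filter_add_card_filter_not (s := E)
      (p := fun e : Fin 6 × Fin 6 × Fin 6 =>
        e.1 ≠ 0 ∧ e.1 ≠ 1 ∧ e.2.1 ≠ 0 ∧ e.2.1 ≠ 1 ∧ e.2.2 ≠ 0 ∧ e.2.2 ≠ 1) using 3
  have e1 := h1 0; have e2 := h1 1; have f1 := h2 0; have f2 := h2 1
  have g1 := h3 0; have g2 := h3 1
  simp only [Matrix.cons_val_zero, Matrix.cons_val_one, Matrix.head_cons] at e1 e2 f1 f2 g1 g2
  -- bad edges are ≤ 54
  have hbadsub : (E.filter fun e => ¬ (e.1 ≠ 0 ∧ e.1 ≠ 1 ∧ e.2.1 ≠ 0 ∧ e.2.1 ≠ 1 ∧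
      e.2.2 ≠ 0 ∧ e.2.2 ≠ 1)) ⊆
      (E.filter fun e => e.1 = 0) ∪ (E.filter fun e => e.1 = 1) ∪
      (E.filter fun e => e.2.1 = 0) ∪ (E.filter fun e => e.2.1 = 1) ∪
      (E.filter fun e => e.2.2 = 0) ∪ (E.filter fun e => e.2.2 = 1) := by
    intro e he
    simp only [Finset.mem_filter, not_and_or, not_not] at he
    simp only [Finset.mem_union, Finset.mem_filter]
    tauto
  have hbad := Finset.card_le_card hbadsub
  have c5 := Finset.card_union_le
    ((E.filter fun e => e.1 = 0) ∪ (E.filter fun e => e.1 = 1) ∪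
     (E.filter fun e => e.2.1 = 0) ∪ (E.filter fun e => e.2.1 = 1) ∪
     (E.filter fun e => e.2.2 = 0)) (E.filter fun e => e.2.2 = 1)
  have c4 := Finset.card_union_le
    ((E.filter fun e => e.1 = 0) ∪ (E.filter fun e => e.1 = 1) ∪
     (E.filter fun e => e.2.1 = 0) ∪ (E.filter fun e => e.2.1 = 1))
    (E.filter fun e => e.2.2 = 0)
  have c3 := Finset.card_union_le
    ((E.filter fun e => e.1 = 0) ∪ (E.filter fun e => e.1 = 1) ∪
     (E.filter fun e => e.2.1 = 0)) (E.filter fun e => e.2.1 = 1)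
  have c2 := Finset.card_union_le
    ((E.filter fun e => e.1 = 0) ∪ (E.filter fun e => e.1 = 1))
    (E.filter fun e => e.2.1 = 0)
  have c1 := Finset.card_union_le (E.filter fun e => e.1 = 0) (E.filter fun e => e.1 = 1)
  -- good edges fit in a 4×4×4 box with only 64 cells
  have hgood : (E.filter fun e => e.1 ≠ 0 ∧ e.1 ≠ 1 ∧ e.2.1 ≠ 0 ∧ e.2.1 ≠ 1 ∧
      e.2.2 ≠ 0 ∧ e.2.2 ≠ 1).card ≤ 64 := by
    have hsub : (E.filter fun e => e.1 ≠ 0 ∧ e.1 ≠ 1 ∧ e.2.1 ≠ 0 ∧ e.2.1 ≠ 1 ∧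
        e.2.2 ≠ 0 ∧ e.2.2 ≠ 1) ⊆
        (Finset.univ.filter fun e : Fin 6 × Fin 6 × Fin 6 => e.1 ≠ 0 ∧ e.1 ≠ 1 ∧
          e.2.1 ≠ 0 ∧ e.2.1 ≠ 1 ∧ e.2.2 ≠ 0 ∧ e.2.2 ≠ 1) :=
      Finset.filter_subset_filter _ (Finset.subset_univ E)
    have : (Finset.univ.filter fun e : Fin 6 × Fin 6 × Fin 6 => e.1 ≠ 0 ∧ e.1 ≠ 1 ∧
        e.2.1 ≠ 0 ∧ e.2.1 ≠ 1 ∧ e.2.2 ≠ 0 ∧ e.2.2 ≠ 1).card = 64 := by decide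
    have := Finset.card_le_card hsub
    omega
  omega
end
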